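/- arXiv:2009.00592 — 5 statements merged into one kernel-verified Lean document; each statement's English description precedes it below -/
import Mathlib

section
/- The map Φ sending a d-dimensional ℕ-matrix A to its last passage time matrix G is a bijection from the set of d-dimensional ℕ-matrices onto the set of d-dimensional partitions, with inverse given by π ↦ (i ↦ π(i) − max_{ℓ ∈ [d]} π(i + e_ℓ)). -/
open scoped BigOperators

noncomputable section

namespace HDP

variable {d : ℕ}

/-- The step `i → i + e_ℓ` in `ℤ₊^d` (coordinates are 0-based). -/
def step (i : Fin d → ℕ) (ℓ : Fin d) : Fin d → ℕ := Function.update i ℓ (i ℓ + 1)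

/-- `p` is a directed lattice path of length `n` starting at `i`:
each step goes from a point to the point plus a standard basis vector. -/
def IsPathFrom (i : Fin d → ℕ) (n : ℕ) (p : ℕ → Fin d → ℕ) : Prop :=
  p 0 = i ∧ ∀ t < n, ∃ ℓ, p (t + 1) = step (p t) ℓ

/-- The last passage time `G(i)`: the maximum, over directed lattice paths starting
at `i`, of the sum of the entries of `A` along the path. -/
def lpt (A : (Fin d → ℕ) → ℕ) (i : Fin d → ℕ) : ℕ :=
  sSup {s | ∃ n p, IsPathFrom i n p ∧ s = ∑ t ∈ Finset.range (n + 1), A (p t)}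

/-- A `d`-dimensional partition: a finitely supported function `ℤ₊^d → ℕ`
which is weakly decreasing in each coordinate. -/
def IsPartition (π : (Fin d → ℕ) → ℕ) : Prop :=
  (Function.support π).Finite ∧ ∀ i j : Fin d → ℕ, (∀ k, i k ≤ j k) → π j ≤ π i

/-- The set of corners of a `d`-dimensional partition `π` : points `(i, k)` of the
diagram of `π` (i.e. `1 ≤ k ≤ π i`) such that `(i + e ℓ, k)` is not in the diagram
for every `ℓ ∈ [d]`. -/
def Cor (π : (Fin d → ℕ) → ℕ) : Set ((Fin d → ℕ) × ℕ) :=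
  {p | 1 ≤ p.2 ∧ p.2 ≤ π p.1 ∧ ∀ ℓ, π (step p.1 ℓ) < p.2}

/-- The number of corners of `π`. -/
def cor (π : (Fin d → ℕ) → ℕ) : ℕ := Nat.card (Cor π)

/-- The corner-hook volume of `π`: the sum over corners `(i, k)` of
`i₁ + ⋯ + i_d - d + 1` (in 1-based coordinates; with our 0-based
coordinates this cohook length is `(∑ j, i j) + 1`). -/
def chvol (π : (Fin d → ℕ) → ℕ) : ℕ := ∑ᶠ p ∈ Cor π, ((∑ j, p.1 j) + 1)

/-- A set is down-closed for the componentwise order. -/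
def DownClosed (ρ : Set (Fin d → ℕ)) : Prop :=
  ∀ i j : Fin d → ℕ, (∀ k, i k ≤ j k) → j ∈ ρ → i ∈ ρ

/-- The set of top corners of a shape `ρ`. -/
def Cr (ρ : Set (Fin d → ℕ)) : Set (Fin d → ℕ) := {i ∈ ρ | ∀ ℓ, step i ℓ ∉ ρ}

-- Auxiliary lemmas
lemma step_le (i : Fin d → ℕ) (ℓ : Fin d) : ∀ k, i k ≤ step i ℓ k := by
  intro k
  unfold step
  rcases eq_or_ne k ℓ with h | h
  · subst h; simp
  · rw [Function.update_of_ne h]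

lemma sum_step (i : Fin d → ℕ) (ℓ : Fin d) : ∑ k, step i ℓ k = (∑ k, i k) + 1 := by
  unfold step
  rw [Finset.sum_update_of_mem (Finset.mem_univ ℓ), ← Finset.erase_eq,
    ← Finset.sum_erase_add Finset.univ i (Finset.mem_univ ℓ)]
  ring

lemma path_facts {i : Fin d → ℕ} {n : ℕ} {p : ℕ → Fin d → ℕ}
    (h : IsPathFrom i n p) :
    ∀ t, t ≤ n → (∀ k, i k ≤ p t k) ∧ (∑ k, p t k) = (∑ k, i k) + t := by
  intro t
  induction t with
  | zero => intro _; rw [h.1]; exact ⟨fun _ => le_rfl, by simp⟩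
  | succ t ih =>
    intro ht
    have ht' : t < n := by omega
    obtain ⟨ℓ, hℓ⟩ := h.2 t ht'
    obtain ⟨h1, h2⟩ := ih (le_of_lt ht')
    refine ⟨fun k => (h1 k).trans (by rw [hℓ]; exact step_le _ _ k), ?_⟩
    rw [hℓ, sum_step, h2]; omega

lemma path_sum_le {A : (Fin d → ℕ) → ℕ} (hA : (Function.support A).Finite)
    {i : Fin d → ℕ} {n : ℕ} {p : ℕ → Fin d → ℕ} (h : IsPathFrom i n p) :
    ∑ t ∈ Finset.range (n + 1), A (p t) ≤ ∑ j ∈ hA.toFinset, A j := by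
  have hinj : ∀ a ∈ Finset.range (n + 1), ∀ b ∈ Finset.range (n + 1), p a = p b → a = b := by
    intro a ha b hb hab
    rw [Finset.mem_range] at ha hb
    have h1 := (path_facts h a (by omega)).2
    have h2 := (path_facts h b (by omega)).2
    rw [hab] at h1
    omega
  calc ∑ t ∈ Finset.range (n + 1), A (p t)
      = ∑ j ∈ (Finset.range (n + 1)).image p, A j := (Finset.sum_image hinj).symm
    _ ≤ ∑ j ∈ (Finset.range (n + 1)).image p ∪ hA.toFinset, A j :=
        Finset.sum_le_sum_of_subset Finset.subset_union_left
    _ = ∑ j ∈ hA.toFinset, A j := by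
        refine (Finset.sum_subset Finset.subset_union_right ?_).symm
        intro x _ hx
        rw [Set.Finite.mem_toFinset, Function.mem_support, not_not] at hx
        exact hx

lemma lpt_bddAbove {A : (Fin d → ℕ) → ℕ} (hA : (Function.support A).Finite)
    (i : Fin d → ℕ) :
    BddAbove {s | ∃ n p, IsPathFrom i n p ∧ s = ∑ t ∈ Finset.range (n + 1), A (p t)} := by
  refine ⟨∑ j ∈ hA.toFinset, A j, ?_⟩
  rintro s ⟨n, p, hp, rfl⟩
  exact path_sum_le hA hp

lemma lpt_set_nonempty (A : (Fin d → ℕ) → ℕ) (i : Fin d → ℕ) :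
    Set.Nonempty {s | ∃ n p, IsPathFrom i n p ∧ s = ∑ t ∈ Finset.range (n + 1), A (p t)} :=
  ⟨A i, 0, fun _ => i, ⟨rfl, fun t ht => absurd ht (Nat.not_lt_zero t)⟩, by simp⟩

lemma self_le_lpt {A : (Fin d → ℕ) → ℕ} (hA : (Function.support A).Finite)
    (i : Fin d → ℕ) : A i ≤ lpt A i :=
  le_csSup (lpt_bddAbove hA i) ⟨0, fun _ => i, ⟨rfl, fun t ht => absurd ht (Nat.not_lt_zero t)⟩, by simp⟩

/-- prepend `i` to a path from `step i ℓ` -/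
lemma prepend_path {A : (Fin d → ℕ) → ℕ} {i : Fin d → ℕ} {ℓ : Fin d} {n : ℕ} {p : ℕ → Fin d → ℕ}
    (h : IsPathFrom (step i ℓ) n p) :
    IsPathFrom i (n + 1) (fun t => if t = 0 then i else p (t - 1)) ∧
    ∑ t ∈ Finset.range (n + 2), A (if t = 0 then i else p (t - 1)) =
      A i + ∑ t ∈ Finset.range (n + 1), A (p t) := by
  constructor
  · refine ⟨rfl, ?_⟩
    intro t ht
    rcases Nat.eq_zero_or_pos t with rfl | hpos
    · exact ⟨ℓ, by simp [h.1]⟩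
    · obtain ⟨t', rfl⟩ : ∃ t', t = t' + 1 := ⟨t - 1, by omega⟩
      obtain ⟨ℓ', hℓ'⟩ := h.2 t' (by omega)
      exact ⟨ℓ', by simpa using hℓ'⟩
  · rw [Finset.sum_range_succ' (fun t => A (if t = 0 then i else p (t - 1))) (n + 1)]
    simp [add_comm]

lemma lpt_rec {A : (Fin d → ℕ) → ℕ} (hA : (Function.support A).Finite)
    (i : Fin d → ℕ) :
    lpt A i = A i + Finset.univ.sup (fun ℓ : Fin d => lpt A (step i ℓ)) := by
  apply le_antisymm
  · have hmem := Nat.sSup_mem (lpt_set_nonempty A i) (lpt_bddAbove hA i)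
    obtain ⟨n, p, hp, hs⟩ := hmem
    have hgoal : lpt A i = ∑ t ∈ Finset.range (n + 1), A (p t) := hs
    rw [hgoal]
    clear hs hgoal
    rcases Nat.eq_zero_or_pos n with rfl | hn
    · simp only [zero_add, Finset.range_one, Finset.sum_singleton, hp.1]
      exact Nat.le_add_right _ _
    · obtain ⟨m, rfl⟩ : ∃ m, n = m + 1 := ⟨n - 1, by omega⟩
      obtain ⟨ℓ, hℓ⟩ := hp.2 0 (by omega)
      rw [hp.1] at hℓ
      have hq : IsPathFrom (step i ℓ) m (fun t => p (t + 1)) := by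
        refine ⟨hℓ ▸ rfl, ?_⟩
        intro t ht
        exact hp.2 (t + 1) (by omega)
      have hsum : ∑ t ∈ Finset.range (m + 2), A (p t)
          = A i + ∑ t ∈ Finset.range (m + 1), A (p (t + 1)) := by
        rw [Finset.sum_range_succ' (fun t => A (p t)) (m + 1), hp.1, add_comm]
      rw [hsum]
      have h1 : ∑ t ∈ Finset.range (m + 1), A (p (t + 1)) ≤ lpt A (step i ℓ) :=
        le_csSup (lpt_bddAbove hA _) ⟨m, fun t => p (t + 1), hq, rfl⟩
      exact Nat.add_le_add_left (h1.trans (Finset.le_sup (f := fun ℓ : Fin d => lpt A (step i ℓ)) (Finset.mem_univ ℓ))) _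
  · rcases isEmpty_or_nonempty (Fin d) with hd | hd
    · simp only [Finset.univ_eq_empty, Finset.sup_empty]
      simpa using self_le_lpt hA i
    · obtain ⟨ℓ, -, hℓ⟩ := Finset.exists_mem_eq_sup Finset.univ Finset.univ_nonempty
        (fun ℓ : Fin d => lpt A (step i ℓ))
      rw [hℓ]
      have hmem := Nat.sSup_mem (lpt_set_nonempty A (step i ℓ)) (lpt_bddAbove hA (step i ℓ))
      obtain ⟨n, p, hp, hs⟩ := hmem
      have hpre := prepend_path (A := A) hp
      refine le_csSup (lpt_bddAbove hA i) ⟨n + 1, _, hpre.1, ?_⟩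
      rw [hpre.2, ← hs]
      rfl


lemma lpt_step_le {A : (Fin d → ℕ) → ℕ} (hA : (Function.support A).Finite)
    (i : Fin d → ℕ) (ℓ : Fin d) : lpt A (step i ℓ) ≤ lpt A i := by
  rw [lpt_rec hA i]
  exact le_add_of_nonneg_of_le (Nat.zero_le _)
    (Finset.le_sup (f := fun ℓ : Fin d => lpt A (step i ℓ)) (Finset.mem_univ ℓ))

lemma lpt_antitone {A : (Fin d → ℕ) → ℕ} (hA : (Function.support A).Finite) :
    ∀ (n : ℕ) (i j : Fin d → ℕ), (∑ k, (j k - i k)) = n → (∀ k, i k ≤ j k) →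
      lpt A j ≤ lpt A i := by
  intro n
  induction n with
  | zero =>
    intro i j hsum hle
    have : i = j := by
      funext k
      have := (Finset.sum_eq_zero_iff).mp hsum k (Finset.mem_univ k)
      have := hle k
      omega
    rw [this]
  | succ n ih =>
    intro i j hsum hle
    have hex : ∃ ℓ, i ℓ < j ℓ := by
      by_contra hcon
      push_neg at hcon
      have : ∑ k, (j k - i k) = 0 :=
        Finset.sum_eq_zero (fun k _ => by have := hcon k; omega)
      omega
    obtain ⟨ℓ, hℓ⟩ := hex
    have h1 : ∀ k, step i ℓ k ≤ j k := by
      intro k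
      unfold step
      rcases eq_or_ne k ℓ with h | h
      · subst h; simp; omega
      · rw [Function.update_of_ne h]; exact hle k
    have h2 : ∑ k, (j k - step i ℓ k) = n := by
      have e1 := Finset.sum_erase_add Finset.univ (fun k => j k - step i ℓ k)
        (Finset.mem_univ ℓ)
      have e2 := Finset.sum_erase_add Finset.univ (fun k => j k - i k) (Finset.mem_univ ℓ)
      have e3 : ∑ k ∈ Finset.univ.erase ℓ, (j k - step i ℓ k)
          = ∑ k ∈ Finset.univ.erase ℓ, (j k - i k) := by
        refine Finset.sum_congr rfl (fun k hk => ?_)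
        unfold step
        rw [Function.update_of_ne (Finset.ne_of_mem_erase hk)]
      have e4 : step i ℓ ℓ = i ℓ + 1 := Function.update_self ℓ _ i
      rw [e4] at e1
      omega
    exact (ih (step i ℓ) j h2 h1).trans (lpt_step_le hA i ℓ)

lemma lpt_support_finite {A : (Fin d → ℕ) → ℕ} (hA : (Function.support A).Finite) :
    (Function.support (lpt A)).Finite := by
  have hsub : Function.support (lpt A) ⊆ ⋃ j ∈ hA.toFinset, Set.Iic j := by
    intro i hi
    rw [Function.mem_support] at hi
    have hmem := Nat.sSup_mem (lpt_set_nonempty A i) (lpt_bddAbove hA i)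
    obtain ⟨n, p, hp, hs⟩ := hmem
    have hne : lpt A i = ∑ t ∈ Finset.range (n + 1), A (p t) := hs
    rw [hne] at hi
    obtain ⟨t, ht, hAt⟩ := Finset.exists_ne_zero_of_sum_ne_zero hi
    rw [Finset.mem_range] at ht
    exact Set.mem_biUnion (Finset.mem_coe.mpr (hA.mem_toFinset.mpr hAt))
      ((path_facts hp t (Nat.lt_succ_iff.mp ht)).1 : i ≤ p t)
  exact Set.Finite.subset (Set.Finite.biUnion (Finset.finite_toSet _)
    (fun j _ => Set.finite_Iic j)) hsub

lemma lpt_zero_of_partition_zero {π : (Fin d → ℕ) → ℕ} (hπ : IsPartition π)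
    {i : Fin d → ℕ} (hi : π i = 0) :
    lpt (fun j => π j - Finset.univ.sup fun ℓ : Fin d => π (step j ℓ)) i = 0 := by
  set A := fun j => π j - Finset.univ.sup fun ℓ : Fin d => π (step j ℓ) with hAdef
  have hAle : ∀ j, A j ≤ π j := fun j => Nat.sub_le _ _
  apply Nat.le_antisymm _ (Nat.zero_le _)
  apply csSup_le (lpt_set_nonempty A i)
  rintro s ⟨n, p, hp, rfl⟩
  have : ∀ t ∈ Finset.range (n + 1), A (p t) = 0 := by
    intro t ht
    rw [Finset.mem_range] at ht
    have hge := (path_facts hp t (by omega)).1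
    have := hπ.2 i (p t) hge
    have := hAle (p t)
    omega
  simp [Finset.sum_eq_zero this]


lemma left_inverse {A : (Fin d → ℕ) → ℕ} (hA : (Function.support A).Finite) :
    (fun i => lpt A i - Finset.univ.sup fun ℓ : Fin d => lpt A (step i ℓ)) = A := by
  funext i
  rw [lpt_rec hA i]
  omega

lemma inv_support {π : (Fin d → ℕ) → ℕ} (hπ : IsPartition π) :
    (Function.support fun i => π i - Finset.univ.sup fun ℓ : Fin d => π (step i ℓ)).Finite := by
  refine hπ.1.subset (fun i hi => ?_)
  rw [Function.mem_support] at hi ⊢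
  intro h0
  rw [h0] at hi
  omega

lemma inv_rec {π : (Fin d → ℕ) → ℕ} (hπ : IsPartition π) (i : Fin d → ℕ) :
    (π i - Finset.univ.sup fun ℓ : Fin d => π (step i ℓ)) +
      (Finset.univ.sup fun ℓ : Fin d => π (step i ℓ)) = π i :=
  Nat.sub_add_cancel (Finset.sup_le (fun ℓ _ => hπ.2 i (step i ℓ) (step_le i ℓ)))

lemma right_inverse {π : (Fin d → ℕ) → ℕ} (hπ : IsPartition π) :
    lpt (fun i => π i - Finset.univ.sup fun ℓ : Fin d => π (step i ℓ)) = π := by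
  set A := fun i => π i - Finset.univ.sup fun ℓ : Fin d => π (step i ℓ) with hAdef
  have hA : (Function.support A).Finite := inv_support hπ
  obtain ⟨N, hNb⟩ : ∃ N : ℕ, ∀ i : Fin d → ℕ, π i ≠ 0 → ∑ k, i k ≤ N :=
    ⟨(hπ.1.toFinset).sup (fun j => ∑ k, j k),
      fun i hne => Finset.le_sup (f := fun j => ∑ k, j k) (hπ.1.mem_toFinset.mpr hne)⟩
  have hN : ∀ i : Fin d → ℕ, N < ∑ k, i k → π i = 0 := by
    intro i hlt
    by_contra hne
    have := hNb i hne
    omega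
  have main : ∀ m : ℕ, ∀ i : Fin d → ℕ, N + 1 - ∑ k, i k ≤ m → lpt A i = π i := by
    intro m
    induction m with
    | zero =>
      intro i hm
      have hz : π i = 0 := hN i (by omega)
      rw [lpt_zero_of_partition_zero hπ hz, hz]
    | succ m ih =>
      intro i hm
      by_cases hz : π i = 0
      · rw [lpt_zero_of_partition_zero hπ hz, hz]
      · have hle : ∑ k, i k ≤ N := hNb i hz
        rw [lpt_rec hA i]
        have hcongr : (Finset.univ.sup fun ℓ : Fin d => lpt A (step i ℓ))
            = Finset.univ.sup fun ℓ : Fin d => π (step i ℓ) := by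
          refine Finset.sup_congr rfl (fun ℓ _ => ?_)
          refine ih (step i ℓ) ?_
          rw [sum_step]
          omega
        rw [hcongr]
        exact inv_rec hπ i
  funext i
  exact main (N + 1) i (by omega)

end HDP

open HDP

/-- The map `Φ = lpt` is a bijection from `d`-dimensional `ℕ`-matrices onto
`d`-dimensional partitions, with inverse `π ↦ (i ↦ π i - max_{ℓ} π (i + e_ℓ))`. -/
theorem lastPassage_bijection {d : ℕ} :
    Set.BijOn (lpt (d := d)) {A | (Function.support A).Finite} {π | IsPartition π} ∧
    (∀ A : (Fin d → ℕ) → ℕ, (Function.support A).Finite →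
      (fun i => lpt A i - Finset.univ.sup fun ℓ : Fin d => lpt A (step i ℓ)) = A) ∧
    (∀ π : (Fin d → ℕ) → ℕ, IsPartition π →
      lpt (fun i => π i - Finset.univ.sup fun ℓ : Fin d => π (step i ℓ)) = π) := by
  refine ⟨⟨?_, ?_, ?_⟩, ?_, ?_⟩
  · intro A hA
    exact ⟨lpt_support_finite hA, fun i j hle => lpt_antitone hA _ i j rfl hle⟩
  · intro A1 hA1 A2 hA2 heq
    have h1 := left_inverse hA1
    have h2 := left_inverse hA2
    rw [← h1, ← h2, heq]
  · intro π hπ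
    exact ⟨_, inv_support hπ, right_inverse hπ⟩
  · exact fun A hA => left_inverse hA
  · exact fun π hπ => right_inverse hπ
end
end

section
/- Let A be a d-dimensional ℕ-matrix and π = Φ(A) its last passage partition. Then the multivariable monomial weights agree: ∏_{i ∈ (ℤ₊)^d} (x^{(1)}_{i₁}···x^{(d)}_{i_d})^{A(i)} = ∏_{(i₁,...,i_{d+1}) ∈ Cor(π)} x^{(1)}_{i₁}···x^{(d)}_{i_d}. -/
open scoped BigOperators

noncomputable section

open HDP

namespace HDPAux
open HDP Finset

variable {d : ℕ}

def pathSet (A : (Fin d → ℕ) → ℕ) (i : Fin d → ℕ) : Set ℕ :=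
  {s | ∃ n p, IsPathFrom i n p ∧ s = ∑ t ∈ Finset.range (n + 1), A (p t)}

lemma lpt_def (A : (Fin d → ℕ) → ℕ) (i : Fin d → ℕ) : lpt A i = sSup (pathSet A i) := rfl

lemma pathSet_nonempty (A : (Fin d → ℕ) → ℕ) (i : Fin d → ℕ) : (pathSet A i).Nonempty :=
  ⟨A i, 0, fun _ => i, ⟨rfl, fun t ht => absurd ht (by omega)⟩, by simp⟩

lemma le_step (i : Fin d → ℕ) (ℓ k : Fin d) : i k ≤ step i ℓ k := by
  unfold step
  rw [Function.update_apply]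
  split
  · next h => subst h; omega
  · exact le_rfl

lemma sum_step (i : Fin d → ℕ) (ℓ : Fin d) : ∑ j, step i ℓ j = (∑ j, i j) + 1 := by
  classical
  unfold step
  rw [Finset.sum_update_of_mem (Finset.mem_univ ℓ)]
  rw [show (∑ j, i j) = i ℓ + ∑ j ∈ Finset.univ \ {ℓ}, i j by
    rw [Finset.sdiff_singleton_eq_erase, Finset.add_sum_erase _ i (Finset.mem_univ ℓ)]]
  omega

lemma path_sum_coord {i : Fin d → ℕ} {n : ℕ} {p : ℕ → Fin d → ℕ}
    (h : IsPathFrom i n p) : ∀ t ≤ n, ∑ j, p t j = (∑ j, i j) + t := by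
  intro t
  induction t with
  | zero => intro _; simp [h.1]
  | succ t ih =>
    intro ht
    obtain ⟨ℓ, hℓ⟩ := h.2 t (by omega)
    rw [hℓ, sum_step, ih (by omega)]
    omega

lemma path_le {i : Fin d → ℕ} {n : ℕ} {p : ℕ → Fin d → ℕ}
    (h : IsPathFrom i n p) : ∀ t ≤ n, ∀ k, i k ≤ p t k := by
  intro t
  induction t with
  | zero => intro _ k; rw [h.1]
  | succ t ih =>
    intro ht k
    obtain ⟨ℓ, hℓ⟩ := h.2 t (by omega)
    rw [hℓ]
    exact (ih (by omega) k).trans (le_step _ _ _)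

lemma path_sum_le {A : (Fin d → ℕ) → ℕ} (hA : (Function.support A).Finite)
    {i : Fin d → ℕ} {n : ℕ} {p : ℕ → Fin d → ℕ} (h : IsPathFrom i n p) :
    ∑ t ∈ Finset.range (n + 1), A (p t) ≤ ∑ s ∈ hA.toFinset, A s := by
  classical
  have hinj : Set.InjOn p (Finset.range (n + 1)) := by
    intro t ht u hu htu
    simp only [Finset.coe_range, Set.mem_Iio] at ht hu
    have h1 := path_sum_coord h t (by omega)
    have h2 := path_sum_coord h u (by omega)
    rw [htu] at h1
    omega
  rw [← Finset.sum_image (fun t ht u hu htu => hinj ht hu htu)]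
  rw [← Finset.sum_filter_ne_zero]
  apply Finset.sum_le_sum_of_subset
  intro s hs
  simp only [Finset.mem_filter] at hs
  simpa using hs.2

lemma bddAbove_pathSet {A : (Fin d → ℕ) → ℕ} (hA : (Function.support A).Finite)
    (i : Fin d → ℕ) : BddAbove (pathSet A i) := by
  refine ⟨∑ s ∈ hA.toFinset, A s, ?_⟩
  rintro s ⟨n, p, hp, rfl⟩
  exact path_sum_le hA hp

lemma lpt_mem {A : (Fin d → ℕ) → ℕ} (hA : (Function.support A).Finite)
    (i : Fin d → ℕ) : lpt A i ∈ pathSet A i :=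
  Nat.sSup_mem (pathSet_nonempty A i) (bddAbove_pathSet hA i)

lemma le_lpt {A : (Fin d → ℕ) → ℕ} (hA : (Function.support A).Finite)
    {i : Fin d → ℕ} {s : ℕ} (hs : s ∈ pathSet A i) : s ≤ lpt A i :=
  le_csSup (bddAbove_pathSet hA i) hs

/-- The max of `lpt` over the neighbours. -/
def Mx (A : (Fin d → ℕ) → ℕ) (i : Fin d → ℕ) : ℕ :=
  Finset.univ.sup fun ℓ => lpt A (step i ℓ)

lemma lpt_eq {A : (Fin d → ℕ) → ℕ} (hA : (Function.support A).Finite)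
    (i : Fin d → ℕ) : lpt A i = A i + Mx A i := by
  apply le_antisymm
  · obtain ⟨n, p, hp, hsum⟩ := lpt_mem hA i
    rw [hsum]
    match n with
    | 0 =>
      rw [show (0:ℕ) + 1 = 1 from rfl, Finset.range_one, Finset.sum_singleton, hp.1]
      omega
    | n + 1 =>
      rw [Finset.sum_range_succ']
      obtain ⟨ℓ, hℓ⟩ := hp.2 0 (by omega)
      have hq : IsPathFrom (step i ℓ) n (fun t => p (t + 1)) := by
        refine ⟨?_, fun t ht => hp.2 (t + 1) (by omega)⟩
        show p (0 + 1) = step i ℓ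
        rw [hℓ, hp.1]
      have h1 : ∑ t ∈ Finset.range (n + 1), A (p (t + 1)) ≤ lpt A (step i ℓ) :=
        le_lpt hA ⟨n, _, hq, rfl⟩
      have h2 : lpt A (step i ℓ) ≤ Mx A i :=
        Finset.le_sup (f := fun ℓ => lpt A (step i ℓ)) (Finset.mem_univ ℓ)
      rw [hp.1]
      omega
  · rcases isEmpty_or_nonempty (Fin d) with hd | hd
    · have hM : Mx A i = 0 := by
        rw [Mx, Finset.univ_eq_empty, Finset.sup_empty]; rfl
      have hb : A i ≤ lpt A i := le_lpt hA ⟨0, fun _ => i,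
        ⟨rfl, fun t ht => absurd ht (by omega)⟩, by simp⟩
      omega
    · obtain ⟨ℓ, -, hℓ⟩ := Finset.exists_mem_eq_sup Finset.univ Finset.univ_nonempty
        (fun ℓ => lpt A (step i ℓ))
      obtain ⟨n, q, hq, hqsum⟩ := lpt_mem hA (step i ℓ)
      set p : ℕ → Fin d → ℕ := fun t => match t with | 0 => i | t + 1 => q t with hpdef
      have hp : IsPathFrom i (n + 1) p := by
        refine ⟨rfl, fun t ht => ?_⟩
        match t with
        | 0 => exact ⟨ℓ, by simp [hpdef, hq.1]⟩
        | t + 1 => exact hq.2 t (by omega)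
      have hmem : A i + lpt A (step i ℓ) ∈ pathSet A i := by
        refine ⟨n + 1, p, hp, ?_⟩
        rw [Finset.sum_range_succ', hqsum]
        have hsucc : ∀ k, p (k + 1) = q k := fun k => rfl
        have hp0 : p 0 = i := rfl
        simp only [hsucc, hp0]
        omega
      have hle := le_lpt hA hmem
      have hM : Mx A i = lpt A (step i ℓ) := hℓ
      omega

lemma lpt_support_finite (A : (Fin d → ℕ) → ℕ) (hA : (Function.support A).Finite) :
    (Function.support (lpt A)).Finite := by
  apply Set.Finite.subset (Set.Finite.biUnion hA (fun s _ => Set.finite_Iic s))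
  intro i hi
  obtain ⟨n, p, hp, hsum⟩ := lpt_mem hA i
  have : ∑ t ∈ Finset.range (n + 1), A (p t) ≠ 0 := by
    rw [← hsum]; exact hi
  obtain ⟨t, ht, hAt⟩ := Finset.exists_ne_zero_of_sum_ne_zero this
  rw [Finset.mem_range] at ht
  refine Set.mem_biUnion (hAt : p t ∈ Function.support A) ?_
  exact fun k => path_le hp t (by omega) k

/-- The corners of `lpt A` as a finset. -/
noncomputable def corFinset (A : (Fin d → ℕ) → ℕ) (hA : (Function.support A).Finite) :
    Finset ((Fin d → ℕ) × ℕ) :=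
  (lpt_support_finite A hA).toFinset.biUnion fun i =>
    (Finset.Ioc (Mx A i) (lpt A i)).image fun k => (i, k)

lemma cor_eq (A : (Fin d → ℕ) → ℕ) (hA : (Function.support A).Finite) :
    Cor (lpt A) = ↑(corFinset A hA) := by
  ext p
  simp only [corFinset, Finset.coe_biUnion, Finset.mem_coe, Set.mem_iUnion,
    Finset.mem_image, Finset.mem_Ioc, Set.Finite.mem_toFinset, Function.mem_support, Cor,
    Set.mem_setOf_eq]
  constructor
  · rintro ⟨h1, h2, h3⟩
    refine ⟨p.1, ?_, p.2, ⟨?_, h2⟩, rfl⟩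
    · omega
    · rw [Mx, Finset.sup_lt_iff (show ⊥ < p.2 from h1)]
      exact fun ℓ _ => h3 ℓ
  · rintro ⟨i, hi, k, ⟨hk1, hk2⟩, rfl⟩
    refine ⟨by omega, hk2, fun ℓ => ?_⟩
    show lpt A (step i ℓ) < k
    exact lt_of_le_of_lt
      (Finset.le_sup (f := fun ℓ => lpt A (step i ℓ)) (Finset.mem_univ ℓ)) hk1

end HDPAux

open HDPAux

/-- The monomial weight of a matrix `A` agrees with the corner monomial weight of
its last passage partition `Φ(A)`.  The variable `x^{(j)}_m` is `X (j, m)`. -/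
theorem weight_eq_corner_weight {d : ℕ} (A : (Fin d → ℕ) → ℕ)
    (hA : (Function.support A).Finite) :
    ∏ᶠ i : Fin d → ℕ,
        (∏ j : Fin d, (MvPolynomial.X (j, i j) : MvPolynomial (Fin d × ℕ) ℤ)) ^ A i
      = ∏ᶠ p ∈ Cor (lpt A),
          ∏ j : Fin d, (MvPolynomial.X (j, p.1 j) : MvPolynomial (Fin d × ℕ) ℤ) := by
  classical
  set f : (Fin d → ℕ) → MvPolynomial (Fin d × ℕ) ℤ :=
    fun i => ∏ j : Fin d, MvPolynomial.X (j, i j) with hf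
  have hS := lpt_support_finite A hA
  rw [cor_eq A hA, finprod_mem_coe_finset]
  have hLHS : ∏ᶠ i : Fin d → ℕ, (f i) ^ A i = ∏ i ∈ hS.toFinset, (f i) ^ A i := by
    apply finprod_eq_prod_of_mulSupport_subset
    intro i hi
    simp only [Function.mem_mulSupport] at hi
    have hAi : A i ≠ 0 := fun h => hi (by rw [h, pow_zero])
    have : lpt A i ≠ 0 := by
      have h1 : A i ≤ lpt A i := le_lpt hA ⟨0, fun _ => i,
        ⟨rfl, fun t ht => absurd ht (by omega)⟩, by simp⟩
      omega
    simpa using this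
  rw [hLHS, corFinset, Finset.prod_biUnion]
  · apply Finset.prod_congr rfl
    intro i _
    rw [Finset.prod_image (fun a _ b _ h => by simpa using h)]
    simp only [Finset.prod_const, Nat.card_Ioc]
    congr 1
    have := lpt_eq hA i
    omega
  · intro x _ y _ hxy
    simp only [Function.onFun]
    rw [Finset.disjoint_left]
    intro p hp hq
    simp only [Finset.mem_image, Finset.mem_Ioc] at hp hq
    obtain ⟨a, _, rfl⟩ := hp
    obtain ⟨b, _, hb⟩ := hq
    exact hxy (congrArg Prod.fst hb).symm
end
end

section
/- The number of d-dimensional partitions π with corner-hook volume |π|_{ch} = n equals MacMahon's number m_d(n), defined by Σ_n m_d(n) q^n = ∏_{k≥1} (1 − q^k)^{−binom(k+d−2,d−1)}. -/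
open scoped BigOperators

noncomputable section

open HDP

/-- The product topology on formal power series (coefficientwise convergence). -/
instance powerSeriesTopology : TopologicalSpace (PowerSeries ℚ) :=
  inferInstanceAs (TopologicalSpace ((Unit →₀ ℕ) → ℚ))

/-!
A `d`-dimensional partition `π` is determined by its jumps
`A(i) = π(i) - max_ℓ π(i + e_ℓ)`, and every finitely supported `A : ℤ₊^d → ℕ` arises this way:
`π` is recovered as the last passage time `G_A`, the largest `A`-weight of a directed lattice
path starting at `i`, because `G_A(i) = A(i) + max_ℓ G_A(i + e_ℓ)`. The corners above `i` are
the `(i, k)` with `max_ℓ π(i + e_ℓ) < k ≤ π(i)`, so `|π|_ch = ∑ᵢ A(i) (i₁ + ⋯ + i_d + 1)`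
(0-based coordinates). Partitions of corner-hook volume `n` are therefore multisets of cells of
total weight `n`, a cell of level `k` having weight `k + 1`; there are `C(k+d-1, d-1)` cells of
level `k`, whence MacMahon's product.
-/

namespace HDP

open Finset Function

variable {d : ℕ}

def level (i : Fin d → ℕ) : ℕ := ∑ j, i j

lemma le_step (i : Fin d → ℕ) (ℓ : Fin d) : i ≤ step i ℓ := by
  intro k
  rcases eq_or_ne k ℓ with rfl | h
  · simp [step]
  · simp [step, h]

lemma step_le_of_lt {i j : Fin d → ℕ} {ℓ : Fin d} (hij : i ≤ j) (hℓ : i ℓ < j ℓ) :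
    step i ℓ ≤ j := by
  intro k
  rcases eq_or_ne k ℓ with rfl | h
  · simpa [step] using hℓ
  · simpa [step, h] using hij k

lemma level_step (i : Fin d → ℕ) (ℓ : Fin d) : level (step i ℓ) = level i + 1 := by
  unfold level step
  rw [sum_update_of_mem (mem_univ ℓ), sum_eq_add_sum_sdiff_singleton_of_mem (mem_univ ℓ) i]
  omega

lemma level_lt_level {i j : Fin d → ℕ} (hij : i < j) : level i < level j := by
  obtain ⟨hle, ℓ, hℓ⟩ := Pi.lt_def.mp hij
  exact sum_lt_sum (fun k _ => hle k) ⟨ℓ, mem_univ ℓ, hℓ⟩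

lemma exists_level_bound {s : Set (Fin d → ℕ)} (hs : s.Finite) : ∃ M, ∀ i ∈ s, level i < M :=
  ⟨hs.toFinset.sup level + 1, fun _ hi => Nat.lt_succ_of_le (le_sup (hs.mem_toFinset.mpr hi))⟩

theorem antitone_of_step_le {α : Type*} [Preorder α] {f : (Fin d → ℕ) → α}
    (hf : ∀ i ℓ, f (step i ℓ) ≤ f i) : Antitone f := by
  intro i j hij
  induction h : level j - level i generalizing i with
  | zero =>
    obtain rfl | hlt := hij.eq_or_lt
    · exact le_rfl
    · have := level_lt_level hlt
      omega
  | succ n ih =>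
    obtain rfl | hlt := hij.eq_or_lt
    · exact le_rfl
    obtain ⟨-, ℓ, hℓ⟩ := Pi.lt_def.mp hlt
    exact (ih (step_le_of_lt hij hℓ) (by rw [level_step]; omega)).trans (hf i ℓ)

section Jump

def succMax (π : (Fin d → ℕ) → ℕ) (i : Fin d → ℕ) : ℕ := univ.sup fun ℓ => π (step i ℓ)

/-- For a partition, the number of corners above the cell `i`. -/
def jump (π : (Fin d → ℕ) → ℕ) (i : Fin d → ℕ) : ℕ := π i - succMax π i

lemma le_succMax (π : (Fin d → ℕ) → ℕ) (i : Fin d → ℕ) (ℓ : Fin d) :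
    π (step i ℓ) ≤ succMax π i :=
  le_sup (f := fun ℓ => π (step i ℓ)) (mem_univ ℓ)

namespace IsPartition

variable {π π' : (Fin d → ℕ) → ℕ}

lemma antitone (hπ : IsPartition π) : Antitone π := fun i j hij => hπ.2 i j hij

lemma succMax_le (hπ : IsPartition π) (i : Fin d → ℕ) : succMax π i ≤ π i :=
  Finset.sup_le fun ℓ _ => hπ.antitone (le_step i ℓ)

lemma jump_add_succMax (hπ : IsPartition π) (i : Fin d → ℕ) :
    jump π i + succMax π i = π i :=
  Nat.sub_add_cancel (hπ.succMax_le i)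

lemma support_jump_finite (hπ : IsPartition π) : (support (jump π)).Finite :=
  hπ.1.subset fun i hi => by
    simp only [mem_support, jump] at hi ⊢
    omega

/-- Downward induction on the level, starting above the (finite) supports. -/
theorem eq_of_jump_eq (hπ : IsPartition π) (hπ' : IsPartition π') (h : jump π = jump π') :
    π = π' := by
  obtain ⟨M, hM⟩ := exists_level_bound (hπ.1.union hπ'.1)
  funext i
  induction hn : M - level i generalizing i with
  | zero =>
    have hi : i ∉ support π ∪ support π' := fun hi => by have := hM i hi; omega
    simp only [Set.mem_union, mem_support, not_or, not_not] at hi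
    rw [hi.1, hi.2]
  | succ n ih =>
    have hsucc : succMax π i = succMax π' i :=
      sup_congr rfl fun ℓ _ => ih (step i ℓ) (by rw [level_step]; omega)
    rw [← hπ.jump_add_succMax, ← hπ'.jump_add_succMax, h, hsucc]

end IsPartition

end Jump

section LastPassage

variable {A : (Fin d → ℕ) → ℕ} {i : Fin d → ℕ}

def pathSums (A : (Fin d → ℕ) → ℕ) (i : Fin d → ℕ) : Set ℕ :=
  {s | ∃ n p, IsPathFrom i n p ∧ s = ∑ t ∈ range (n + 1), A (p t)}

namespace IsPathFrom

variable {n : ℕ} {p : ℕ → Fin d → ℕ}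

lemma level_apply (hp : IsPathFrom i n p) {t : ℕ} (ht : t ≤ n) : level (p t) = level i + t := by
  induction t with
  | zero => rw [hp.1, add_zero]
  | succ t ih =>
    obtain ⟨ℓ, hℓ⟩ := hp.2 t ht
    rw [hℓ, level_step, ih (by omega), add_assoc]

lemma le_apply (hp : IsPathFrom i n p) {t : ℕ} (ht : t ≤ n) : i ≤ p t := by
  induction t with
  | zero => rw [hp.1]
  | succ t ih =>
    obtain ⟨ℓ, hℓ⟩ := hp.2 t ht
    exact hℓ ▸ (ih (by omega)).trans (le_step _ ℓ)

end IsPathFrom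

lemma self_mem_pathSums : A i ∈ pathSums A i :=
  ⟨0, fun _ => i, ⟨rfl, fun t ht => absurd ht (Nat.not_lt_zero t)⟩, by simp⟩

lemma add_mem_pathSums {ℓ : Fin d} {s : ℕ} (hs : s ∈ pathSums A (step i ℓ)) :
    A i + s ∈ pathSums A i := by
  obtain ⟨n, p, ⟨hp0, hp⟩, rfl⟩ := hs
  refine ⟨n + 1, fun t => if t = 0 then i else p (t - 1), ⟨rfl, fun t ht => ?_⟩, ?_⟩
  · rcases t with _ | t
    · exact ⟨ℓ, by simp [hp0]⟩
    · simpa using hp t (by omega)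
  · rw [sum_range_succ' _ (n + 1)]
    simp [add_comm]

lemma eq_or_exists_of_mem_pathSums {s : ℕ} (hs : s ∈ pathSums A i) :
    s = A i ∨ ∃ ℓ, ∃ s' ∈ pathSums A (step i ℓ), s = A i + s' := by
  obtain ⟨n, p, hp, rfl⟩ := hs
  rcases n with _ | n
  · simp [hp.1]
  · obtain ⟨ℓ, hℓ⟩ := hp.2 0 (Nat.succ_pos n)
    have htail : IsPathFrom (step i ℓ) n fun t => p (t + 1) :=
      ⟨by simpa [hp.1] using hℓ, fun t ht => hp.2 (t + 1) (by omega)⟩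
    refine Or.inr ⟨ℓ, _, ⟨n, _, htail, rfl⟩, ?_⟩
    rw [sum_range_succ', hp.1, add_comm]

/-- A directed path visits each cell at most once, since the level increases along it. -/
lemma bddAbove_pathSums (hA : (support A).Finite) (i : Fin d → ℕ) :
    BddAbove (pathSums A i) := by
  refine ⟨∑ j ∈ hA.toFinset, A j, ?_⟩
  rintro _ ⟨n, p, hp, rfl⟩
  have hinj : Set.InjOn p (range (n + 1)) := fun t ht t' ht' h => by
    have := hp.level_apply (Nat.lt_succ_iff.mp (mem_range.mp ht))
    have := hp.level_apply (Nat.lt_succ_iff.mp (mem_range.mp ht'))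
    rw [h] at *
    omega
  rw [← sum_image hinj]
  exact sum_le_sum_of_ne_zero fun j _ hj => hA.mem_toFinset.mpr hj

lemma lpt_mem_pathSums (hA : (support A).Finite) (i : Fin d → ℕ) : lpt A i ∈ pathSums A i :=
  Nat.sSup_mem ⟨_, self_mem_pathSums⟩ (bddAbove_pathSums hA i)

lemma le_lpt (hA : (support A).Finite) {s : ℕ} (hs : s ∈ pathSums A i) : s ≤ lpt A i :=
  le_csSup (bddAbove_pathSums hA i) hs

theorem lpt_eq_add_succMax (hd : 0 < d) (hA : (support A).Finite) (i : Fin d → ℕ) :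
    lpt A i = A i + succMax (lpt A) i := by
  refine le_antisymm (csSup_le ⟨_, self_mem_pathSums⟩ fun s hs => ?_) ?_
  · obtain rfl | ⟨ℓ, s', hs', rfl⟩ := eq_or_exists_of_mem_pathSums hs
    · exact Nat.le_add_right _ _
    · exact Nat.add_le_add_left ((le_lpt hA hs').trans (le_succMax _ i ℓ)) _
  · have : (univ : Finset (Fin d)).Nonempty := univ_nonempty_iff.mpr (Fin.pos_iff_nonempty.mp hd)
    obtain ⟨ℓ, -, hℓ⟩ := exists_mem_eq_sup univ this fun ℓ => lpt A (step i ℓ)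
    rw [succMax, hℓ]
    exact le_lpt hA (add_mem_pathSums (lpt_mem_pathSums hA _))

lemma exists_le_of_lpt_ne_zero (hA : (support A).Finite) (h : lpt A i ≠ 0) :
    ∃ j, i ≤ j ∧ A j ≠ 0 := by
  obtain ⟨n, p, hp, hsum⟩ := lpt_mem_pathSums hA i
  obtain ⟨t, ht, hAt⟩ := exists_ne_zero_of_sum_ne_zero (hsum ▸ h)
  exact ⟨p t, hp.le_apply (Nat.lt_succ_iff.mp (mem_range.mp ht)), hAt⟩

theorem isPartition_lpt (hd : 0 < d) (hA : (support A).Finite) : IsPartition (lpt A) := by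
  refine ⟨(hA.biUnion fun j _ => Set.finite_Iic j).subset fun i hi => ?_,
    fun i j hij => antitone_of_step_le (fun i ℓ => ?_) hij⟩
  · obtain ⟨j, hij, hj⟩ := exists_le_of_lpt_ne_zero hA hi
    exact Set.mem_biUnion hj hij
  · rw [lpt_eq_add_succMax hd hA i]
    exact (le_succMax _ i ℓ).trans (Nat.le_add_left _ _)

theorem jump_lpt (hd : 0 < d) (hA : (support A).Finite) : jump (lpt A) = A := by
  funext i
  rw [jump, lpt_eq_add_succMax hd hA i, Nat.add_sub_cancel]

theorem IsPartition.lpt_jump (hd : 0 < d) {π : (Fin d → ℕ) → ℕ} (hπ : IsPartition π) :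
    lpt (jump π) = π :=
  (isPartition_lpt hd hπ.support_jump_finite).eq_of_jump_eq hπ (jump_lpt hd hπ.support_jump_finite)

end LastPassage

section Corners

variable {π : (Fin d → ℕ) → ℕ}

def fillingWeight (A : (Fin d → ℕ) → ℕ) : ℕ := ∑ᶠ i, A i * (level i + 1)

lemma mem_Cor_iff {p : (Fin d → ℕ) × ℕ} :
    p ∈ Cor π ↔ succMax π p.1 < p.2 ∧ p.2 ≤ π p.1 := by
  refine ⟨fun ⟨h1, h2, h3⟩ => ⟨(Finset.sup_lt_iff h1).mpr fun ℓ _ => h3 ℓ, h2⟩,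
    fun ⟨h1, h2⟩ => ⟨by omega, h2, fun ℓ => (le_succMax π p.1 ℓ).trans_lt h1⟩⟩

theorem IsPartition.chvol_eq (hπ : IsPartition π) : chvol π = fillingWeight (jump π) := by
  have hfin : (Cor π).Finite := (hπ.1.prod (Set.finite_Iic (π 0))).subset
    fun p ⟨h1, h2, _⟩ => ⟨Nat.pos_iff_ne_zero.mp (h1.trans h2),
      h2.trans (hπ.antitone (fun _ => Nat.zero_le _))⟩
  calc chvol π = ∑ p ∈ hfin.toFinset, (level p.1 + 1) := finsum_mem_eq_finite_toFinset_sum _ hfin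
    _ = ∑ i ∈ hπ.1.toFinset, ∑ _k ∈ Ioc (succMax π i) (π i), (level i + 1) :=
        sum_finset_product _ _ _ fun p => by
          simp only [Set.Finite.mem_toFinset, mem_Cor_iff, mem_support, mem_Ioc]
          omega
    _ = ∑ i ∈ hπ.1.toFinset, jump π i * (level i + 1) := by
        simp only [sum_const, Nat.card_Ioc, smul_eq_mul, jump]
    _ = fillingWeight (jump π) := by
        refine (finsum_eq_sum_of_support_subset _ fun i hi => ?_).symm
        simp only [mem_support, Set.Finite.coe_toFinset, jump] at hi ⊢
        intro h
        simp [h] at hi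

def partitionEquivFilling (hd : 0 < d) (n : ℕ) :
    {π : (Fin d → ℕ) → ℕ // IsPartition π ∧ chvol π = n} ≃
      {A : (Fin d → ℕ) → ℕ // (support A).Finite ∧ fillingWeight A = n} where
  toFun π := ⟨jump π, π.2.1.support_jump_finite, π.2.1.chvol_eq ▸ π.2.2⟩
  invFun A := ⟨lpt A, isPartition_lpt hd A.2.1, by
    rw [(isPartition_lpt hd A.2.1).chvol_eq, jump_lpt hd A.2.1, A.2.2]⟩
  left_inv π := Subtype.ext (π.2.1.lpt_jump hd)
  right_inv A := Subtype.ext (jump_lpt hd A.2.1)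

end Corners

section GeneratingFunction

open PowerSeries

variable {K ι : Type*} [Field K]

theorem coeff_inv_one_sub_X_pow {c : ℕ} (hc : 0 < c) (n : ℕ) :
    coeff n ((1 - X ^ c : K⟦X⟧)⁻¹) = if c ∣ n then 1 else 0 := by
  suffices h : (1 - X ^ c : K⟦X⟧)⁻¹ = mk fun n => if c ∣ n then 1 else 0 by rw [h, coeff_mk]
  rw [PowerSeries.inv_eq_iff_mul_eq_one (by simp [hc.ne']), mul_sub, mul_one]
  ext n
  rw [map_sub, coeff_mk, coeff_mul_X_pow', coeff_one]
  rcases Nat.eq_zero_or_pos n with rfl | hn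
  · simp [hc.not_ge]
  rw [if_neg hn.ne']
  by_cases hcn : c ≤ n
  · have hdvd : c ∣ n - c ↔ c ∣ n := Nat.dvd_sub_iff_left hcn dvd_rfl
    rw [if_pos hcn, coeff_mk]
    simp only [hdvd, sub_self]
  · rw [if_neg hcn, if_neg fun h => hcn (Nat.le_of_dvd hn h), sub_zero]

theorem coeff_prod_inv_one_sub_X_pow [DecidableEq ι] (T : Finset ι) {c : ι → ℕ}
    (hc : ∀ i, 0 < c i) (n : ℕ) :
    coeff n (∏ i ∈ T, (1 - X ^ c i : K⟦X⟧)⁻¹) =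
      #{l ∈ T.finsuppAntidiag n | ∀ i ∈ T, c i ∣ l i} := by
  simp only [coeff_prod, coeff_inv_one_sub_X_pow (hc _), prod_boole, sum_boole]

lemma support_mul_subset_of_finsum_mul_eq {A c : ι → ℕ} {T : Finset ι} {n : ℕ}
    (hA : (support A).Finite) (hT : ∀ i, c i ≤ n → i ∈ T) (hAn : ∑ᶠ i, A i * c i = n) :
    support (fun i => A i * c i) ⊆ T := fun i hi =>
  hT i (hAn ▸ (Nat.le_mul_of_pos_left _ (Nat.pos_of_ne_zero (left_ne_zero_of_mul hi))).trans
    (single_le_finsum i (hA.subset (support_mul_subset_left _ _)) fun _ => Nat.zero_le _))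

/-- The bijection is `A ↦ A * c`. -/
theorem card_filter_dvd_finsuppAntidiag [DecidableEq ι] {T : Finset ι} {c : ι → ℕ}
    (hc : ∀ i, 0 < c i) {n : ℕ} (hT : ∀ i, c i ≤ n → i ∈ T) :
    #{l ∈ T.finsuppAntidiag n | ∀ i ∈ T, c i ∣ l i} =
      Nat.card {A : ι → ℕ // (support A).Finite ∧ ∑ᶠ i, A i * c i = n} := by
  set F := {l ∈ T.finsuppAntidiag n | ∀ i ∈ T, c i ∣ l i}
  have hF {l : ι →₀ ℕ} (hl : l ∈ F) (i : ι) : l i / c i * c i = l i := by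
    simp only [F, mem_filter, mem_finsuppAntidiag] at hl
    by_cases hi : i ∈ T
    · exact Nat.div_mul_cancel (hl.2 i hi)
    · rw [Finsupp.notMem_support_iff.mp fun h => hi (hl.1.2 h), Nat.zero_div, zero_mul]
  have hsum {l : ι →₀ ℕ} (hl : l ∈ F) : ∑ᶠ i, l i = n := by
    simp only [F, mem_filter, mem_finsuppAntidiag] at hl
    rw [finsum_eq_sum_of_support_subset l (by simpa using hl.1.2), hl.1.1]
  have himage : {A : ι → ℕ | (support A).Finite ∧ ∑ᶠ i, A i * c i = n} =
      (fun (l : ι →₀ ℕ) i => l i / c i) '' F := by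
    ext A
    constructor
    · rintro ⟨hA, hAn⟩
      have hAc : (support fun i => A i * c i).Finite := hA.subset (support_mul_subset_left _ _)
      have hAT := support_mul_subset_of_finsum_mul_eq hA hT hAn
      refine ⟨Finsupp.ofSupportFinite _ hAc, mem_coe.mpr ?_,
        funext fun i => Nat.mul_div_cancel _ (hc i)⟩
      simp only [F, mem_filter, mem_finsuppAntidiag, Finsupp.ofSupportFinite_coe]
      refine ⟨⟨?_, ?_⟩, fun i _ => dvd_mul_left _ _⟩
      · rw [← finsum_eq_sum_of_support_subset _ hAT, hAn]
      · simpa [Finsupp.support, Finsupp.ofSupportFinite] using hAT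
    · rintro ⟨l, hl, rfl⟩
      refine ⟨l.support.finite_toSet.subset fun i hi => Finsupp.mem_support_iff.mpr fun h => ?_, ?_⟩
      · simp [h] at hi
      · simp only [hF hl, hsum hl]
  have hinj : Set.InjOn (fun (l : ι →₀ ℕ) i => l i / c i) F := fun l hl l' hl' h =>
    Finsupp.ext fun i => by rw [← hF hl i, ← hF hl' i]; exact congrArg (· * c i) (congr_fun h i)
  rw [← Set.ncard_coe_finset, ← hinj.ncard_image, ← himage]
  exact (Nat.card_coe_set_eq _).symm

lemma card_antidiagonalTuple (hd : 0 < d) (k : ℕ) :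
    #(Nat.antidiagonalTuple d k) = (k + d - 1).choose (d - 1) := by
  classical
  calc #(Nat.antidiagonalTuple d k) = Fintype.card (Sym (Fin d) k) := by
        rw [← Nat.card_eq_finsetCard, ← Nat.card_eq_fintype_card]
        exact Nat.card_congr ((Equiv.subtypeEquivRight fun _ => Nat.mem_antidiagonalTuple).trans
          (Sym.equivNatSumOfFintype (Fin d) k).symm)
    _ = (k + d - 1).choose (d - 1) := by
        rw [Sym.card_sym_eq_choose, Fintype.card_fin, add_comm d k]
        exact Nat.choose_symm_of_eq_add (by omega)

def cellsOfLevelIn (s : Finset ℕ) : Finset (Fin d → ℕ) := s.biUnion (Nat.antidiagonalTuple d)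

lemma mem_cellsOfLevelIn {s : Finset ℕ} {i : Fin d → ℕ} : i ∈ cellsOfLevelIn s ↔ level i ∈ s := by
  simp [cellsOfLevelIn, Nat.mem_antidiagonalTuple, level]

lemma prod_macMahon_eq_prod_cells (hd : 0 < d) (s : Finset ℕ) :
    ∏ k ∈ s, ((1 - X ^ (k + 1) : ℚ⟦X⟧)⁻¹) ^ (k + d - 1).choose (d - 1) =
      ∏ i ∈ cellsOfLevelIn (d := d) s, (1 - X ^ (level i + 1) : ℚ⟦X⟧)⁻¹ := by
  rw [cellsOfLevelIn, prod_biUnion fun k _ k' _ hne => disjoint_left.mpr fun i hi hi' =>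
    hne ((Nat.mem_antidiagonalTuple.mp hi).symm.trans (Nat.mem_antidiagonalTuple.mp hi'))]
  refine prod_congr rfl fun k _ => ?_
  rw [← card_antidiagonalTuple hd, ← prod_const]
  exact prod_congr rfl fun i hi => by rw [level, Nat.mem_antidiagonalTuple.mp hi]

theorem hasProd_macMahon (hd : 0 < d) :
    HasProd (fun k => ((1 - X ^ (k + 1) : ℚ⟦X⟧)⁻¹) ^ (k + d - 1).choose (d - 1))
      (mk fun n => (Nat.card {A : (Fin d → ℕ) → ℕ // (support A).Finite ∧
        fillingWeight A = n} : ℚ)) := by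
  unfold fillingWeight
  refine (WithPiTopology.tendsto_iff_coeff_tendsto ℚ _ _ _).mpr fun n => ?_
  refine tendsto_const_nhds.congr' ?_
  filter_upwards [Filter.eventually_ge_atTop (range n)] with s hs
  have hT (i : Fin d → ℕ) (hi : level i + 1 ≤ n) : i ∈ cellsOfLevelIn s :=
    mem_cellsOfLevelIn.mpr (hs (mem_range.mpr hi))
  rw [coeff_mk, prod_macMahon_eq_prod_cells hd,
    coeff_prod_inv_one_sub_X_pow _ (fun _ => Nat.succ_pos _),
    card_filter_dvd_finsuppAntidiag (fun _ => Nat.succ_pos _) hT]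

end GeneratingFunction

end HDP

open PowerSeries in
/-- The product index `k : ℕ` stands for `k + 1 ≥ 1`, so the binomial `C(k+d-2, d-1)` is
written `C(k+d-1, d-1)`. -/
theorem macMahon_numbers_count_cornerHook_volume {d : ℕ} (hd : 0 < d)
    (m : ℕ → ℕ)
    (hm : PowerSeries.mk (fun n => (m n : ℚ))
      = ∏' k : ℕ, ((1 - (PowerSeries.X : PowerSeries ℚ) ^ (k + 1))⁻¹)
          ^ Nat.choose (k + d - 1) (d - 1)) (n : ℕ) :
    Nat.card {π : (Fin d → ℕ) → ℕ // IsPartition π ∧ chvol π = n} = m n := by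
  have : T2Space (PowerSeries ℚ) := WithPiTopology.instT2Space ℚ
  rw [(hasProd_macMahon hd).tprod_eq] at hm
  have hcoeff := congrArg (coeff n) hm
  rw [coeff_mk, coeff_mk] at hcoeff
  rw [Nat.card_congr (partitionEquivFilling hd n)]
  exact_mod_cast hcoeff.symm
end
end

section
/- Simple branching rule: g_ρ(1, x₁,...,x_n) = Σ_{σ ⊆ ρ} g_σ(x₁,...,x_n), where the sum is over (d−1)-dimensional partitions σ whose diagram is contained in the diagram of ρ. -/
open scoped BigOperators

noncomputable section

namespace HDG

/- Throughout, the paper's dimension is `d = e + 1`: a `d`-dimensional partition is a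
finitely supported, componentwise weakly decreasing function `ℕ × (Fin e → ℕ) → ℕ`
(the first of the `d` coordinates is split off; all coordinates are 0-based). -/

variable {e : ℕ}

/-- The step `i' → i' + e_ℓ`. -/
def step (i : Fin e → ℕ) (ℓ : Fin e) : Fin e → ℕ := Function.update i ℓ (i ℓ + 1)

/-- A `d = e+1`-dimensional partition. -/
def IsPart (π : ℕ × (Fin e → ℕ) → ℕ) : Prop :=
  (Function.support π).Finite ∧
    ∀ i j : ℕ × (Fin e → ℕ), i.1 ≤ j.1 → (∀ ℓ, i.2 ℓ ≤ j.2 ℓ) → π j ≤ π i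

/-- A `(d-1) = e`-dimensional partition. -/
def IsPart' (ρ : (Fin e → ℕ) → ℕ) : Prop :=
  (Function.support ρ).Finite ∧ ∀ i j : Fin e → ℕ, (∀ ℓ, i ℓ ≤ j ℓ) → ρ j ≤ ρ i

/-- The diagram of a `(d-1)`-dimensional partition `ρ`: the points `(i', k)`
with `1 ≤ k ≤ ρ i'`. -/
def Diag (ρ : (Fin e → ℕ) → ℕ) : Set ((Fin e → ℕ) × ℕ) := {p | 1 ≤ p.2 ∧ p.2 ≤ ρ p.1}

/-- `sh₁(π)`: the projection of the diagram of `π` forgetting the first coordinate. -/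
def sh1 (π : ℕ × (Fin e → ℕ) → ℕ) : Set ((Fin e → ℕ) × ℕ) :=
  {p | ∃ i₁ : ℕ, 1 ≤ p.2 ∧ p.2 ≤ π (i₁, p.1)}

/-- `(i₁, i', k)` is a corner of `π`: a point of the diagram such that adding any of
the first `d` standard basis vectors leaves the diagram. -/
def Corner (π : ℕ × (Fin e → ℕ) → ℕ) (i₁ : ℕ) (i' : Fin e → ℕ) (k : ℕ) : Prop :=
  1 ≤ k ∧ k ≤ π (i₁, i') ∧ π (i₁ + 1, i') < k ∧ ∀ ℓ, π (i₁, step i' ℓ) < k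

/-- `c_i(π)`: the number of corners of `π` with first coordinate `i₁`. -/
def cI (π : ℕ × (Fin e → ℕ) → ℕ) (i₁ : ℕ) : ℕ :=
  Nat.card {q : (Fin e → ℕ) × ℕ | Corner π i₁ q.1 q.2}

/-- The diagram of `π` is contained in the box `[m] × [N 0] × ⋯ × [N (e-1)] × [nLast]`. -/
def InBox (m : ℕ) (N : Fin e → ℕ) (nLast : ℕ) (π : ℕ × (Fin e → ℕ) → ℕ) : Prop :=
  (∀ p, π p ≠ 0 → p.1 < m ∧ ∀ ℓ, p.2 ℓ < N ℓ) ∧ ∀ p, π p ≤ nLast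

/-- The diagram of `π` is contained in `[m] × [N 0] × ⋯ × [N (e-1)] × ℤ₊`
(no bound on the values). -/
def InBox' (m : ℕ) (N : Fin e → ℕ) (π : ℕ × (Fin e → ℕ) → ℕ) : Prop :=
  ∀ p, π p ≠ 0 → p.1 < m ∧ ∀ ℓ, p.2 ℓ < N ℓ

end HDG

open HDG
/-- The one-alphabet `d`-dimensional Grothendieck polynomial `g_ρ(x₁,…,x_m)`
(our variables `X 0, …, X (m-1)` are the paper's `x₁, …, x_m`; variables `X i` with
`i ≥ m` do not occur): the sum over `d`-dimensional partitions `π` with diagram in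
the box `[m]×[N 0]×⋯×[N (e-1)]×[nLast]` and `sh₁(π) = D(ρ)` of `∏ᵢ xᵢ^{c_i(π)}`. -/
noncomputable def g (e : ℕ) (m : ℕ) (N : Fin e → ℕ) (nLast : ℕ)
    (ρ : (Fin e → ℕ) → ℕ) : MvPolynomial ℕ ℚ :=
  ∑ᶠ π ∈ {π : ℕ × (Fin e → ℕ) → ℕ | IsPart π ∧ InBox m N nLast π ∧ sh1 π = Diag ρ},
    ∏ᶠ i : ℕ, MvPolynomial.X i ^ cI π i

section AuxProof

open HDG Set

namespace HDGAux

variable {e : ℕ}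

/-- Drop the bottom layer. -/
def down (π : ℕ × (Fin e → ℕ) → ℕ) : ℕ × (Fin e → ℕ) → ℕ := fun p => π (p.1 + 1, p.2)

/-- Put `ρ` as a new bottom layer under `π`. -/
def up (ρ : (Fin e → ℕ) → ℕ) (π : ℕ × (Fin e → ℕ) → ℕ) : ℕ × (Fin e → ℕ) → ℕ :=
  fun p => Nat.casesOn p.1 (ρ p.2) (fun i => π (i, p.2))

lemma down_up (ρ : (Fin e → ℕ) → ℕ) (π : ℕ × (Fin e → ℕ) → ℕ) : down (up ρ π) = π := rfl

lemma diag_le {σ τ : (Fin e → ℕ) → ℕ} (h : Diag σ = Diag τ) (i' : Fin e → ℕ) : σ i' ≤ τ i' := by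
  rcases Nat.eq_zero_or_pos (σ i') with h0 | h0
  · omega
  · have : ((i', σ i') : (Fin e → ℕ) × ℕ) ∈ Diag σ := ⟨h0, le_rfl⟩
    rw [h] at this
    exact this.2

lemma diag_inj {σ τ : (Fin e → ℕ) → ℕ} (h : Diag σ = Diag τ) : σ = τ :=
  funext fun i' => le_antisymm (diag_le h i') (diag_le h.symm i')

lemma sh1_eq {π : ℕ × (Fin e → ℕ) → ℕ} (hπ : IsPart π) :
    sh1 π = Diag (fun i' => π (0, i')) := by
  ext p
  constructor
  · rintro ⟨i₁, h1, h2⟩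
    exact ⟨h1, h2.trans (hπ.2 (0, p.1) (i₁, p.1) (Nat.zero_le _) (fun ℓ => le_rfl))⟩
  · rintro ⟨h1, h2⟩
    exact ⟨0, h1, h2⟩

lemma top_layer {π : ℕ × (Fin e → ℕ) → ℕ} {ρ : (Fin e → ℕ) → ℕ} (hπ : IsPart π)
    (h : sh1 π = Diag ρ) (i' : Fin e → ℕ) : π (0, i') = ρ i' :=
  congrFun (diag_inj ((sh1_eq hπ).symm.trans h)) i'

lemma isPart_down {π : ℕ × (Fin e → ℕ) → ℕ} (hπ : IsPart π) : IsPart (down π) := by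
  constructor
  · have : Function.support (down π) =
        (fun p : ℕ × (Fin e → ℕ) => (p.1 + 1, p.2)) ⁻¹' Function.support π := rfl
    rw [this]
    exact Set.Finite.preimage (fun a _ b _ hab => by
      rw [Prod.mk.injEq] at hab
      exact Prod.ext (by omega) hab.2) hπ.1
  · intro i j h1 h2
    exact hπ.2 (i.1 + 1, i.2) (j.1 + 1, j.2) (by omega) h2

lemma isPart'_layer {π : ℕ × (Fin e → ℕ) → ℕ} (hπ : IsPart π) :
    IsPart' (fun i' => π (0, i')) := by
  constructor
  · have : Function.support (fun i' => π (0, i')) =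
        (fun i' : Fin e → ℕ => ((0 : ℕ), i')) ⁻¹' Function.support π := rfl
    rw [this]
    exact Set.Finite.preimage (fun a _ b _ hab => by
      rw [Prod.mk.injEq] at hab
      exact hab.2) hπ.1
  · intro i j hij
    exact hπ.2 (0, i) (0, j) le_rfl hij

lemma isPart_up {ρ σ : (Fin e → ℕ) → ℕ} {π : ℕ × (Fin e → ℕ) → ℕ} (hρ : IsPart' ρ)
    (hπ : IsPart π) (hsh : sh1 π = Diag σ) (hσρ : ∀ i', σ i' ≤ ρ i') : IsPart (up ρ π) := by
  have htop : ∀ i', π (0, i') = σ i' := top_layer hπ hsh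
  constructor
  · apply Set.Finite.subset ((hρ.1.image (fun i' => ((0 : ℕ), i'))).union
      (hπ.1.image (fun p : ℕ × (Fin e → ℕ) => (p.1 + 1, p.2))))
    rintro ⟨i₁, i'⟩ hp
    cases i₁ with
    | zero => exact Or.inl ⟨i', hp, rfl⟩
    | succ i => exact Or.inr ⟨(i, i'), hp, rfl⟩
  · rintro ⟨a, i'⟩ ⟨b, j'⟩ hab hij
    cases b with
    | zero =>
      obtain rfl : a = 0 := Nat.le_zero.mp hab
      exact hρ.2 i' j' hij
    | succ b =>
      cases a with
      | zero =>
        calc π (b, j') ≤ π (0, i') := hπ.2 (0, i') (b, j') (Nat.zero_le _) hij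
          _ = σ i' := htop i'
          _ ≤ ρ i' := hσρ i'
      | succ a => exact hπ.2 (a, i') (b, j') (by omega) hij

lemma inBox_down {m : ℕ} {N : Fin e → ℕ} {nLast : ℕ} {π : ℕ × (Fin e → ℕ) → ℕ}
    (h : InBox (m + 1) N nLast π) : InBox m N nLast (down π) := by
  constructor
  · intro p hp
    have := h.1 (p.1 + 1, p.2) hp
    exact ⟨by omega, this.2⟩
  · intro p
    exact h.2 (p.1 + 1, p.2)

lemma cI_down (π : ℕ × (Fin e → ℕ) → ℕ) (i : ℕ) : cI (down π) i = cI π (i + 1) := rfl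

lemma cI_eq_zero {m : ℕ} {N : Fin e → ℕ} {nLast : ℕ} {π : ℕ × (Fin e → ℕ) → ℕ}
    (hbox : InBox m N nLast π) {i : ℕ} (him : m ≤ i) : cI π i = 0 := by
  have : {q : (Fin e → ℕ) × ℕ | Corner π i q.1 q.2} = ∅ := by
    ext q
    simp only [Set.mem_setOf_eq, Set.mem_empty_iff_false, iff_false]
    rintro ⟨h1, h2, -⟩
    have hne : π (i, q.1) ≠ 0 := by omega
    have := (hbox.1 (i, q.1) hne).1
    omega
  rw [cI, this]
  simp

lemma mono_eq {m : ℕ} {N : Fin e → ℕ} {nLast : ℕ} {π : ℕ × (Fin e → ℕ) → ℕ}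
    (hbox : InBox m N nLast π) :
    ∏ᶠ i : ℕ, (MvPolynomial.X i : MvPolynomial ℕ ℚ) ^ cI π i
      = ∏ i ∈ Finset.range m, (MvPolynomial.X i : MvPolynomial ℕ ℚ) ^ cI π i := by
  apply finprod_eq_prod_of_mulSupport_subset
  intro i hi
  simp only [Finset.coe_range, Set.mem_Iio]
  by_contra hc
  apply hi
  have h0 : cI π i = 0 := cI_eq_zero hbox (by omega)
  simp [h0]

lemma finite_bddFns {α : Type*} {B : Set α} (hB : B.Finite) (n : ℕ) :
    {f : α → ℕ | (∀ a, f a ≠ 0 → a ∈ B) ∧ ∀ a, f a ≤ n}.Finite := by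
  classical
  haveI := hB.fintype
  apply Set.Finite.of_finite_image (f := fun (f : α → ℕ) (b : B) => f b)
  · apply Set.Finite.subset (Set.Finite.pi (fun _ : B => Set.finite_Iic n))
    rintro g ⟨f, hf, rfl⟩
    intro b _
    exact hf.2 b
  · intro f hf g hg h
    funext a
    by_cases ha : a ∈ B
    · exact congrFun h ⟨a, ha⟩
    · have h1 : f a = 0 := by by_contra hc; exact ha (hf.1 a hc)
      have h2 : g a = 0 := by by_contra hc; exact ha (hg.1 a hc)
      rw [h1, h2]

lemma finite_box (m : ℕ) (N : Fin e → ℕ) :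
    {p : ℕ × (Fin e → ℕ) | p.1 < m ∧ ∀ ℓ, p.2 ℓ < N ℓ}.Finite := by
  apply Set.Finite.subset ((Set.finite_Iio m).prod
    (Set.Finite.pi (fun ℓ : Fin e => Set.finite_Iio (N ℓ))))
  rintro p ⟨h1, h2⟩
  exact ⟨h1, fun ℓ _ => h2 ℓ⟩

lemma finite_S (m : ℕ) (N : Fin e → ℕ) (nLast : ℕ) (ρ : (Fin e → ℕ) → ℕ) :
    {π : ℕ × (Fin e → ℕ) → ℕ | IsPart π ∧ InBox m N nLast π ∧ sh1 π = Diag ρ}.Finite := by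
  apply Set.Finite.subset (finite_bddFns (finite_box m N) nLast)
  rintro π ⟨-, hbox, -⟩
  exact ⟨fun p hp => hbox.1 p hp, hbox.2⟩

end HDGAux

end AuxProof

/-- Simple branching rule: `g_ρ(1, x₁, …, x_n) = Σ_{σ ⊆ ρ} g_σ(x₁, …, x_n)`, summing
over `(d-1)`-dimensional partitions `σ` whose diagram is contained in that of `ρ`. -/
theorem branching_rule {e : ℕ} (n : ℕ) (N : Fin e → ℕ) (nLast : ℕ)
    (ρ : (Fin e → ℕ) → ℕ) (hρ : IsPart' ρ)
    (hρbox : (∀ i', ρ i' ≠ 0 → ∀ ℓ, i' ℓ < N ℓ) ∧ ∀ i', ρ i' ≤ nLast) :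
    MvPolynomial.aeval
        (fun i : ℕ => if i = 0 then (1 : MvPolynomial ℕ ℚ) else MvPolynomial.X (i - 1))
        (g e (n + 1) N nLast ρ)
      = ∑ᶠ σ ∈ {σ : (Fin e → ℕ) → ℕ | IsPart' σ ∧ ∀ i', σ i' ≤ ρ i'},
          g e n N nLast σ := by
  classical
  have hT : {σ : (Fin e → ℕ) → ℕ | IsPart' σ ∧ ∀ i', σ i' ≤ ρ i'}.Finite := by
    apply Set.Finite.subset (HDGAux.finite_bddFns hρ.1 nLast)
    rintro σ ⟨-, hle⟩
    refine ⟨fun a ha => ?_, fun a => (hle a).trans (hρbox.2 a)⟩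
    have := hle a
    simp only [Function.mem_support]
    omega
  have hS : {π : ℕ × (Fin e → ℕ) → ℕ |
      IsPart π ∧ InBox (n + 1) N nLast π ∧ sh1 π = Diag ρ}.Finite :=
    HDGAux.finite_S (n + 1) N nLast ρ
  have hSσfin : ∀ σ ∈ {σ : (Fin e → ℕ) → ℕ | IsPart' σ ∧ ∀ i', σ i' ≤ ρ i'},
      {π : ℕ × (Fin e → ℕ) → ℕ | IsPart π ∧ InBox n N nLast π ∧ sh1 π = Diag σ}.Finite :=
    fun σ _ => HDGAux.finite_S n N nLast σ
  have hdisj : {σ : (Fin e → ℕ) → ℕ | IsPart' σ ∧ ∀ i', σ i' ≤ ρ i'}.PairwiseDisjoint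
      (fun σ => {π : ℕ × (Fin e → ℕ) → ℕ | IsPart π ∧ InBox n N nLast π ∧ sh1 π = Diag σ}) := by
    intro σ hσ τ hτ hne
    refine Set.disjoint_left.mpr ?_
    rintro π ⟨-, -, hsh1⟩ ⟨-, -, hsh2⟩
    exact hne (HDGAux.diag_inj (hsh1.symm.trans hsh2))
  have hbij : Set.BijOn HDGAux.down
      {π : ℕ × (Fin e → ℕ) → ℕ | IsPart π ∧ InBox (n + 1) N nLast π ∧ sh1 π = Diag ρ}
      (⋃ σ ∈ {σ : (Fin e → ℕ) → ℕ | IsPart' σ ∧ ∀ i', σ i' ≤ ρ i'},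
        {π : ℕ × (Fin e → ℕ) → ℕ | IsPart π ∧ InBox n N nLast π ∧ sh1 π = Diag σ}) := by
    refine ⟨?_, ?_, ?_⟩
    · rintro π ⟨hπ, hbox, hsh⟩
      have hd := HDGAux.isPart_down hπ
      have h1 : (fun i' => π (1, i')) ∈
          {σ : (Fin e → ℕ) → ℕ | IsPart' σ ∧ ∀ i', σ i' ≤ ρ i'} := by
        refine ⟨HDGAux.isPart'_layer hd, fun i' => ?_⟩
        calc π (1, i') ≤ π (0, i') := hπ.2 (0, i') (1, i') (by omega) (fun ℓ => le_rfl)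
          _ = ρ i' := HDGAux.top_layer hπ hsh i'
      have h2 : HDGAux.down π ∈ {π' : ℕ × (Fin e → ℕ) → ℕ |
          IsPart π' ∧ InBox n N nLast π' ∧ sh1 π' = Diag (fun i' => π (1, i'))} :=
        ⟨hd, HDGAux.inBox_down hbox, HDGAux.sh1_eq hd⟩
      exact Set.mem_biUnion h1 h2
    · rintro π₁ ⟨hπ₁, -, hsh₁⟩ π₂ ⟨hπ₂, -, hsh₂⟩ h
      funext p
      obtain ⟨i₁, i'⟩ := p
      cases i₁ with
      | zero => rw [HDGAux.top_layer hπ₁ hsh₁, HDGAux.top_layer hπ₂ hsh₂]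
      | succ i => exact congrFun h (i, i')
    · rintro π' hπ'
      simp only [Set.mem_iUnion, Set.mem_setOf_eq] at hπ'
      obtain ⟨σ, ⟨-, hσρ⟩, hp, hbox, hsh⟩ := hπ'
      refine ⟨HDGAux.up ρ π', ⟨HDGAux.isPart_up hρ hp hsh hσρ, ⟨?_, ?_⟩, ?_⟩,
        HDGAux.down_up ρ π'⟩
      · rintro ⟨i₁, i'⟩ hne
        cases i₁ with
        | zero => exact ⟨by omega, hρbox.1 i' hne⟩
        | succ i =>
          have := hbox.1 (i, i') hne
          exact ⟨by omega, this.2⟩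
      · rintro ⟨i₁, i'⟩
        cases i₁ with
        | zero => exact hρbox.2 i'
        | succ i => exact hbox.2 (i, i')
      · exact HDGAux.sh1_eq (HDGAux.isPart_up hρ hp hsh hσρ)
  have key : ∀ π ∈ {π : ℕ × (Fin e → ℕ) → ℕ |
      IsPart π ∧ InBox (n + 1) N nLast π ∧ sh1 π = Diag ρ},
      MvPolynomial.aeval
        (fun i : ℕ => if i = 0 then (1 : MvPolynomial ℕ ℚ) else MvPolynomial.X (i - 1))
        (∏ᶠ i : ℕ, (MvPolynomial.X i : MvPolynomial ℕ ℚ) ^ cI π i)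
      = ∏ᶠ i : ℕ, (MvPolynomial.X i : MvPolynomial ℕ ℚ) ^ cI (HDGAux.down π) i := by
    rintro π ⟨hπ, hbox, -⟩
    have hdbox := HDGAux.inBox_down hbox
    rw [HDGAux.mono_eq hbox, map_prod, Finset.prod_range_succ', HDGAux.mono_eq hdbox]
    simp only [map_pow, MvPolynomial.aeval_X, if_pos, Nat.succ_ne_zero, if_neg,
      Nat.add_sub_cancel, one_pow, mul_one, if_true, reduceIte]
    rfl
  rw [g, finsum_mem_eq_finite_toFinset_sum _ hS, map_sum,
    Finset.sum_congr rfl (fun π hπ => key π (hS.mem_toFinset.mp hπ)),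
    ← finsum_mem_eq_finite_toFinset_sum _ hS]
  have hb := finsum_mem_eq_of_bijOn
    (f := fun π => ∏ᶠ i : ℕ, (MvPolynomial.X i : MvPolynomial ℕ ℚ) ^ cI (HDGAux.down π) i)
    (g := fun π' => ∏ᶠ i : ℕ, (MvPolynomial.X i : MvPolynomial ℕ ℚ) ^ cI π' i)
    HDGAux.down hbij (fun π _ => rfl)
  rw [hb, finsum_mem_biUnion hdisj hT hSσfin]
  rfl
end
end

section
/- Quasisymmetry: the d-dimensional Grothendieck polynomial g_ρ(x^{(1)}; ...; x^{(d)}) is quasisymmetric in the variables x^{(1)} = (x₁,...,x_{n₁}); that is, for all exponents a₁,...,a_k > 0 and all strictly increasing index sequences ℓ₁<···<ℓ_k and j₁<···<j_k in [n₁], the coefficient of x_{ℓ₁}^{a₁}···x_{ℓ_k}^{a_k} in g_ρ equals the coefficient of x_{j₁}^{a₁}···x_{j_k}^{a_k} (treating other x^{(1)} variables as absent and fixing the x^{(2)},...,x^{(d)} monomials). -/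
open scoped BigOperators

noncomputable section

open HDG
/-- The full multivariable `d`-dimensional Grothendieck polynomial
`g_ρ(x^{(1)}; …; x^{(d)})`: the variable `x^{(1)}_{i₁}` is `X (Sum.inl i₁)` and, for
`2 ≤ j ≤ d`, the variable `x^{(j)}_{i_j}` is `X (Sum.inr (j, i_j))`. -/
noncomputable def gFull (e : ℕ) (m : ℕ) (N : Fin e → ℕ) (nLast : ℕ)
    (ρ : (Fin e → ℕ) → ℕ) : MvPolynomial (ℕ ⊕ (Fin e × ℕ)) ℚ :=
  ∑ᶠ π ∈ {π : ℕ × (Fin e → ℕ) → ℕ | IsPart π ∧ InBox m N nLast π ∧ sh1 π = Diag ρ},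
    ∏ᶠ c ∈ {c : ℕ × (Fin e → ℕ) × ℕ | Corner π c.1 c.2.1 c.2.2},
      MvPolynomial.X (Sum.inl c.1) * ∏ ℓ : Fin e, MvPolynomial.X (Sum.inr (ℓ, c.2.1 ℓ))

/-- The exponent vector of the monomial `x_{l 0}^{a 0} ⋯ x_{l (k-1)}^{a (k-1)}` in the
first alphabet, times a fixed monomial `w` in the remaining alphabets. -/
noncomputable def expVec {e : ℕ} {k : ℕ} (l : Fin k → ℕ) (a : Fin k → ℕ)
    (w : (Fin e × ℕ) →₀ ℕ) : (ℕ ⊕ (Fin e × ℕ)) →₀ ℕ :=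
  (∑ t : Fin k, Finsupp.single (Sum.inl (l t)) (a t)) + w.mapDomain Sum.inr

/-!
A layer `π (i, ·)` of a partition without corners coincides with the next layer. Hence, when the
`x^{(1)}`-part of the corner monomial of `π` is supported on `l 0 < ⋯ < l (k - 1)`, the partition
`π` is determined by these `k` layers, each repeated on the block of layers ending at it. Spacing
the blocks so that they end at `j 0 < ⋯ < j (k - 1)` instead keeps the first layer, hence `sh₁`,
and moves the corners of layer `l t` to layer `j t` without changing them otherwise. This is a
bijection between the partitions contributing to the two coefficients.
-/

namespace HDG

open Finset Finsupp MvPolynomial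

variable {e k : ℕ} {π : ℕ × (Fin e → ℕ) → ℕ} {m nLast : ℕ} {N : Fin e → ℕ}
  {ρ : (Fin e → ℕ) → ℕ} {l j : Fin k → ℕ} {a : Fin k → ℕ} {w : (Fin e × ℕ) →₀ ℕ}

theorem IsPart.antitone (hπ : IsPart π) : Antitone π :=
  fun p q hpq => hπ.2 p q hpq.1 hpq.2

theorem IsPart.apply_le (hπ : IsPart π) {i i' : ℕ} {x x' : Fin e → ℕ} (hi : i ≤ i')
    (hx : x ≤ x') : π (i', x') ≤ π (i, x) :=
  hπ.2 (i, x) (i', x') hi hx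

theorem IsPart.mem_sh1_iff (hπ : IsPart π) {p : (Fin e → ℕ) × ℕ} :
    p ∈ sh1 π ↔ 1 ≤ p.2 ∧ p.2 ≤ π (0, p.1) :=
  ⟨fun ⟨i, h1, h2⟩ => ⟨h1, h2.trans (hπ.apply_le (Nat.zero_le i) le_rfl)⟩,
    fun ⟨h1, h2⟩ => ⟨0, h1, h2⟩⟩

theorem IsPart.sh1_congr {π' : ℕ × (Fin e → ℕ) → ℕ} (hπ : IsPart π) (hπ' : IsPart π')
    (h : ∀ x, π (0, x) = π' (0, x)) : sh1 π = sh1 π' := by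
  ext p
  rw [hπ.mem_sh1_iff, hπ'.mem_sh1_iff, h]

theorem IsPart.layer_succ_eq (hπ : IsPart π) {i : ℕ} (h : ∀ x κ, ¬ Corner π i x κ)
    (x : Fin e → ℕ) : π (i + 1, x) = π (i, x) := by
  by_contra hne
  -- a maximal point where the layers `i` and `i + 1` differ would be a corner
  set A := {y : Fin e → ℕ | π (i + 1, y) < π (i, y)}
  have hA : A.Finite := (hπ.1.preimage fun _ _ _ _ h => congrArg Prod.snd h).subset
    fun y (hy : π (i + 1, y) < π (i, y)) => show π (i, y) ≠ 0 by omega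
  obtain ⟨y, hyA, hymax⟩ :=
    hA.exists_maximal ⟨x, lt_of_le_of_ne (hπ.apply_le i.le_succ le_rfl) hne⟩
  refine h y (π (i, y)) ⟨by have : π (i + 1, y) < π (i, y) := hyA; omega, le_rfl, hyA,
    fun ℓ => ?_⟩
  have hy_lt : y < step y ℓ := lt_update_self_iff.2 (Nat.lt_succ_self _)
  by_contra hle
  have hstep : step y ℓ ∈ A :=
    calc π (i + 1, step y ℓ) ≤ π (i + 1, y) := hπ.apply_le le_rfl hy_lt.le
      _ < π (i, y) := hyA
      _ ≤ π (i, step y ℓ) := not_lt.1 hle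
  exact hy_lt.not_ge (hymax hstep hy_lt.le)

theorem IsPart.layer_eq_of_forall_not_corner (hπ : IsPart π) {i i' : ℕ} (hii' : i ≤ i')
    (h : ∀ n, i ≤ n → n < i' → ∀ x κ, ¬ Corner π n x κ) (x : Fin e → ℕ) :
    π (i', x) = π (i, x) := by
  induction i', hii' using Nat.le_induction with
  | base => rfl
  | succ n hin ih =>
    rw [hπ.layer_succ_eq (h n hin n.lt_succ_self),
      ih fun n' h₁ h₂ => h n' h₁ (h₂.trans n.lt_succ_self)]

theorem IsPart.eq_zero_of_forall_not_corner (hπ : IsPart π) {i : ℕ}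
    (h : ∀ n, i ≤ n → ∀ x κ, ¬ Corner π n x κ) (x : Fin e → ℕ) : π (i, x) = 0 := by
  obtain ⟨b, hb⟩ :=
    (hπ.1.preimage (f := fun n => (n, x)) fun _ _ _ _ h => congrArg Prod.fst h).bddAbove
  have hzero : π (max i (b + 1), x) = 0 := by
    by_contra h0
    have := hb h0
    omega
  rw [← hzero, hπ.layer_eq_of_forall_not_corner (le_max_left _ _) fun n hn _ => h n hn]

def box (m : ℕ) (N : Fin e → ℕ) : Set (ℕ × (Fin e → ℕ)) :=
  Set.Iio m ×ˢ Set.univ.pi fun ℓ => Set.Iio (N ℓ)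

theorem finite_box (m : ℕ) (N : Fin e → ℕ) : (box m N).Finite :=
  (Set.finite_Iio m).prod (Set.Finite.pi fun _ => Set.finite_Iio _)

theorem InBox.support_subset (h : InBox m N nLast π) : Function.support π ⊆ box m N :=
  fun p hp => ⟨(h.1 p hp).1, fun ℓ _ => (h.1 p hp).2 ℓ⟩

theorem InBox.isPart (h : InBox m N nLast π) (hπ : Antitone π) : IsPart π :=
  ⟨(finite_box m N).subset h.support_subset, fun _ _ h₁ h₂ => hπ ⟨h₁, h₂⟩⟩

theorem finite_setOf_inBox (m : ℕ) (N : Fin e → ℕ) (nLast : ℕ) :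
    {π : ℕ × (Fin e → ℕ) → ℕ | InBox m N nLast π}.Finite := by
  have : Finite (box m N) := (finite_box m N).to_subtype
  refine Set.Finite.of_injOn (f := fun π (p : box m N) => π p)
    (t := Set.univ.pi fun _ : box m N => Set.Iic nLast) (fun π hπ p _ => hπ.2 p) ?_
    (Set.Finite.pi fun _ => Set.finite_Iic nLast)
  intro π₁ h₁ π₂ h₂ h
  funext p
  by_cases hp : p ∈ box m N
  · exact congrFun h ⟨p, hp⟩
  · rw [Function.notMem_support.1 fun h' => hp (h₁.support_subset h'),
      Function.notMem_support.1 fun h' => hp (h₂.support_subset h')]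

def numBelow (l : Fin k → ℕ) (i : ℕ) : ℕ := #{s | l s < i}

@[simp]
theorem numBelow_zero : numBelow l 0 = 0 := by
  simp [numBelow]

theorem numBelow_mono (l : Fin k → ℕ) : Monotone (numBelow l) :=
  fun _ _ h => card_le_card <| monotone_filter_right _ fun _ _ hs => hs.trans_le h

theorem lt_numBelow_iff (hl : Monotone l) {s : Fin k} {i : ℕ} :
    (s : ℕ) < numBelow l i ↔ l s < i := by
  constructor
  · intro hs
    by_contra hsi
    have : univ.filter (fun s' => l s' < i) ⊆ Iio s := fun s' hs' =>
      mem_Iio.2 <| lt_of_not_ge fun h => hsi <| (hl h).trans_lt (mem_filter.1 hs').2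
    exact (card_le_card this).trans_eq (Fin.card_Iio s) |>.not_gt hs
  · intro hsi
    have : Iic s ⊆ univ.filter (fun s' => l s' < i) := fun s' hs' =>
      mem_filter.2 ⟨mem_univ _, (hl (mem_Iic.1 hs')).trans_lt hsi⟩
    exact (Fin.card_Iic s).symm.trans_le (card_le_card this)

theorem le_apply_numBelow (hl : Monotone l) {i : ℕ} (h : numBelow l i < k) :
    i ≤ l ⟨numBelow l i, h⟩ :=
  not_lt.1 fun hlt => (lt_irrefl _ ((lt_numBelow_iff hl).2 hlt))

theorem numBelow_apply (hl : StrictMono l) (t : Fin k) : numBelow l (l t) = t := by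
  rw [numBelow, filter_congr fun s _ => hl.lt_iff_lt, filter_gt_eq_Iio, Fin.card_Iio]

theorem numBelow_apply_succ (hl : StrictMono l) (t : Fin k) : numBelow l (l t + 1) = t + 1 := by
  rw [numBelow, filter_congr fun s _ => Nat.lt_succ_iff.trans hl.le_iff_le, filter_ge_eq_Iic,
    Fin.card_Iic]

theorem numBelow_succ_of_notMem {i : ℕ} (hi : i ∉ Set.range l) :
    numBelow l (i + 1) = numBelow l i := by
  refine congrArg card (filter_congr fun s _ => ?_)
  have : l s ≠ i := fun h => hi ⟨s, h⟩
  omega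

-- The values beyond `k` only need to exceed those of `l`.
def extend (l : Fin k → ℕ) (t : ℕ) : ℕ := if h : t < k then l ⟨t, h⟩ else ∑ s, l s + t

@[simp]
theorem extend_val (t : Fin k) : extend l t = l t := by
  simp [extend]

theorem strictMono_extend (hl : StrictMono l) : StrictMono (extend l) := by
  intro t t' htt'
  unfold extend
  split_ifs with ht ht'
  · exact hl htt'
  · have : l ⟨t, ht⟩ ≤ ∑ s, l s := single_le_sum (fun _ _ => Nat.zero_le _) (mem_univ _)
    omega
  · omega
  · omega

def compress (l : Fin k → ℕ) (π : ℕ × (Fin e → ℕ) → ℕ) : ℕ × (Fin e → ℕ) → ℕ :=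
  fun p => if p.1 < k then π (extend l p.1, p.2) else 0

/-- `expand j π` repeats layer `t` of `π` on the layers `j (t - 1) < i ≤ j t`, and layer `k`
on the layers above `j (k - 1)`. -/
def expand (j : Fin k → ℕ) (π : ℕ × (Fin e → ℕ) → ℕ) : ℕ × (Fin e → ℕ) → ℕ :=
  fun p => π (numBelow j p.1, p.2)

def relayer (l j : Fin k → ℕ) (π : ℕ × (Fin e → ℕ) → ℕ) : ℕ × (Fin e → ℕ) → ℕ :=
  expand j (compress l π)

theorem compress_eq_zero {p : ℕ × (Fin e → ℕ)} (hp : k ≤ p.1) : compress l π p = 0 :=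
  if_neg hp.not_gt

theorem compress_expand (hj : StrictMono j) (hπ : ∀ p : ℕ × (Fin e → ℕ), k ≤ p.1 → π p = 0) :
    compress j (expand j π) = π := by
  funext ⟨t, x⟩
  by_cases ht : t < k
  · simp [compress, expand, extend, ht, numBelow_apply hj]
  · simp [compress, ht, hπ (t, x) (not_lt.1 ht)]

theorem corner_expand_iff (hj : StrictMono j) {i : ℕ} {x : Fin e → ℕ} {κ : ℕ} :
    Corner (expand j π) i x κ ↔ ∃ t, j t = i ∧ Corner π t x κ := by
  by_cases hi : i ∈ Set.range j
  · obtain ⟨t, rfl⟩ := hi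
    simp only [Corner, expand, numBelow_apply hj, numBelow_apply_succ hj, hj.injective.eq_iff,
      exists_eq_left]
  · simp only [Corner, expand, numBelow_succ_of_notMem hi]
    constructor
    · rintro ⟨-, h₁, h₂, -⟩
      omega
    · rintro ⟨t, rfl, -⟩
      exact absurd ⟨t, rfl⟩ hi

theorem expand_compress (hπ : IsPart π) (hl : StrictMono l)
    (hc : ∀ i x κ, Corner π i x κ → i ∈ Set.range l) : expand l (compress l π) = π := by
  funext ⟨i, x⟩
  by_cases hk : numBelow l i < k
  · set t : Fin k := ⟨numBelow l i, hk⟩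
    have hit : i ≤ l t := le_apply_numBelow hl.monotone hk
    simp only [expand, compress, hk, if_true]
    rw [show extend l (numBelow l i) = l t from extend_val t]
    refine hπ.layer_eq_of_forall_not_corner hit (fun n hin hnt y κ hcorner => ?_) x
    obtain ⟨s, rfl⟩ := hc _ _ _ hcorner
    have hst : (s : ℕ) < t := hl.lt_iff_lt.1 hnt
    exact hin.not_gt ((lt_numBelow_iff hl.monotone).1 hst)
  · simp only [expand, compress, hk, if_false]
    refine (hπ.eq_zero_of_forall_not_corner (fun n hin y κ hcorner => ?_) x).symm
    obtain ⟨s, rfl⟩ := hc _ _ _ hcorner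
    have hs : (s : ℕ) < numBelow l i := s.2.trans_le (not_lt.1 hk)
    exact hin.not_gt ((lt_numBelow_iff hl.monotone).1 hs)

theorem IsPart.compress (hπ : IsPart π) (hl : StrictMono l) : IsPart (compress l π) := by
  have hinj := (strictMono_extend hl).injective.prodMap (Function.injective_id (α := Fin e → ℕ))
  refine ⟨(hπ.1.preimage hinj.injOn).subset fun p hp => ?_, fun p q h₁ h₂ => ?_⟩
  · rw [Function.mem_support, HDG.compress] at hp
    split_ifs at hp
    exacts [hp, absurd rfl hp]
  · unfold HDG.compress
    split_ifs with hq hp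
    · exact hπ.apply_le ((strictMono_extend hl).monotone h₁) h₂
    · omega
    · exact Nat.zero_le _
    · exact le_rfl

theorem InBox.compress (h : InBox m N nLast π) (l : Fin k → ℕ) :
    InBox k N nLast (compress l π) := by
  refine ⟨fun p hp => ?_, fun p => ?_⟩ <;> unfold HDG.compress at * <;> split_ifs at * with hk
  · exact ⟨hk, (h.1 _ hp).2⟩
  · exact absurd rfl hp
  · exact h.2 _
  · exact Nat.zero_le _

theorem InBox.expand (h : InBox k N nLast π) (hj : Monotone j) (hjm : ∀ t, j t < m) :
    InBox m N nLast (expand j π) := by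
  refine ⟨fun p hp => ?_, fun p => h.2 _⟩
  obtain ⟨hk, hN⟩ := h.1 _ hp
  exact ⟨(le_apply_numBelow hj hk).trans_lt (hjm _), hN⟩

theorem antitone_expand (hπ : Antitone π) : Antitone (expand j π) :=
  hπ.comp_monotone ((numBelow_mono j).prodMap monotone_id)

def corners (π : ℕ × (Fin e → ℕ) → ℕ) : Set (ℕ × (Fin e → ℕ) × ℕ) :=
  {c | Corner π c.1 c.2.1 c.2.2}

def cornerExponent (c : ℕ × (Fin e → ℕ) × ℕ) : (ℕ ⊕ (Fin e × ℕ)) →₀ ℕ :=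
  single (Sum.inl c.1) 1 + ∑ ℓ, single (Sum.inr (ℓ, c.2.1 ℓ)) 1

def exponent (π : ℕ × (Fin e → ℕ) → ℕ) : (ℕ ⊕ (Fin e × ℕ)) →₀ ℕ :=
  ∑ᶠ c ∈ corners π, cornerExponent c

theorem finite_corners (hπ : (Function.support π).Finite) : (corners π).Finite := by
  refine (hπ.biUnion fun p _ => (Set.finite_Icc 1 (π p)).image fun κ => (p.1, p.2, κ)).subset ?_
  rintro ⟨i, x, κ⟩ hc
  have h₁ : 1 ≤ κ := hc.1
  have h₂ : κ ≤ π (i, x) := hc.2.1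
  exact Set.mem_biUnion (x := (i, x)) (show π (i, x) ≠ 0 by omega) ⟨κ, ⟨h₁, h₂⟩, rfl⟩

theorem corners_expand (hj : StrictMono j) (hπ : ∀ p : ℕ × (Fin e → ℕ), k ≤ p.1 → π p = 0) :
    corners (expand j π) = Prod.map (extend j) id '' corners π := by
  ext ⟨i, x, κ⟩
  simp only [corners, Set.mem_ofPred_eq, Set.mem_image, corner_expand_iff hj, Prod.exists,
    Prod.map, id, Prod.mk.injEq]
  constructor
  · rintro ⟨t, rfl, hc⟩
    exact ⟨t, x, κ, hc, extend_val t, rfl, rfl⟩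
  · rintro ⟨t, x, κ, hc, rfl, rfl, rfl⟩
    have ht : t < k := by
      by_contra ht
      have h₀ : π (t, x) = 0 := hπ (t, x) (not_lt.1 ht)
      have h₁ : 1 ≤ κ := hc.1
      have h₂ : κ ≤ π (t, x) := hc.2.1
      omega
    exact ⟨⟨t, ht⟩, (extend_val _).symm, hc⟩

theorem cornerExponent_map (f : ℕ → ℕ) (c : ℕ × (Fin e → ℕ) × ℕ) :
    cornerExponent (Prod.map f id c) = (cornerExponent c).mapDomain (Sum.map f id) := by
  simp [cornerExponent, mapDomain_add, mapDomain_finsetSum]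

theorem exponent_expand (hj : StrictMono j) (hπ : ∀ p : ℕ × (Fin e → ℕ), k ≤ p.1 → π p = 0)
    (hfin : (corners π).Finite) :
    exponent (expand j π) = (exponent π).mapDomain (Sum.map (extend j) id) := by
  have hinj := (strictMono_extend hj).injective.prodMap (Function.injective_id (α := (Fin e → ℕ) × ℕ))
  rw [exponent, corners_expand hj hπ, finsum_mem_image hinj.injOn, exponent,
    ← mapDomain.addMonoidHom_apply, AddMonoidHom.map_finsum_mem _ _ hfin]
  simp only [mapDomain.addMonoidHom_apply, cornerExponent_map]

theorem expVec_eq_mapDomain (j : Fin k → ℕ) (a : Fin k → ℕ) (w : (Fin e × ℕ) →₀ ℕ) :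
    expVec j a w = (expVec Fin.val a w).mapDomain (Sum.map (extend j) id) := by
  simp [expVec, mapDomain_add, mapDomain_finsetSum, ← mapDomain_comp]
  rfl

theorem expVec_apply_inl_of_notMem {i : ℕ} (hi : i ∉ Set.range l) :
    expVec l a w (Sum.inl i) = 0 := by
  have hw : Sum.inl i ∉ Set.range (Sum.inr : Fin e × ℕ → ℕ ⊕ (Fin e × ℕ)) :=
    fun ⟨_, h⟩ => Sum.inr_ne_inl h
  simp only [expVec, Finsupp.add_apply, finsetSum_apply, single_apply, Sum.inl.injEq,
    mapDomain_of_notMem_range _ _ hw, add_zero]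
  exact sum_eq_zero fun t _ => if_neg fun h => hi ⟨t, h⟩

theorem mem_range_of_corner (hfin : (corners π).Finite) (hE : exponent π = expVec l a w)
    {i : ℕ} {x : Fin e → ℕ} {κ : ℕ} (hc : Corner π i x κ) : i ∈ Set.range l := by
  by_contra hi
  have hle : cornerExponent (i, x, κ) ≤ exponent π := by
    rw [exponent, finsum_mem_eq_finite_toFinset_sum _ hfin]
    exact single_le_sum (fun _ _ => zero_le) (hfin.mem_toFinset.2 hc)
  have := hle (Sum.inl i)
  rw [hE, expVec_apply_inl_of_notMem hi] at this
  simp [cornerExponent] at this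

theorem expand_compress_of_exponent_eq (hπ : IsPart π) (hl : StrictMono l)
    (hE : exponent π = expVec l a w) : expand l (compress l π) = π :=
  expand_compress hπ hl fun _ _ _ => mem_range_of_corner (finite_corners hπ.1) hE

theorem exponent_compress (hπ : IsPart π) (hl : StrictMono l)
    (hE : exponent π = expVec l a w) : exponent (compress l π) = expVec Fin.val a w := by
  have hrep := expand_compress_of_exponent_eq hπ hl hE
  apply Finsupp.mapDomain_injective ((strictMono_extend hl).injective.sumMap Function.injective_id)
  rw [← exponent_expand hl (fun _ => compress_eq_zero) (finite_corners (hπ.compress hl).1), hrep,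
    hE, expVec_eq_mapDomain]

def partsWithExponent (m : ℕ) (N : Fin e → ℕ) (nLast : ℕ) (ρ : (Fin e → ℕ) → ℕ)
    (v : (ℕ ⊕ (Fin e × ℕ)) →₀ ℕ) : Set (ℕ × (Fin e → ℕ) → ℕ) :=
  {π | (IsPart π ∧ InBox m N nLast π ∧ sh1 π = Diag ρ) ∧ exponent π = v}

theorem mapsTo_relayer (hl : StrictMono l) (hj : StrictMono j) (hjm : ∀ t, j t < m) :
    Set.MapsTo (relayer l j) (partsWithExponent m N nLast ρ (expVec l a w))
      (partsWithExponent m N nLast ρ (expVec j a w)) := by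
  rintro π ⟨⟨hπ, hbox, hsh⟩, hE⟩
  have hrep := expand_compress_of_exponent_eq hπ hl hE
  have hcomp := hπ.compress hl
  have hbox' : InBox m N nLast (relayer l j π) := (hbox.compress l).expand hj.monotone hjm
  have hpart : IsPart (relayer l j π) := hbox'.isPart (antitone_expand hcomp.antitone)
  refine ⟨⟨hpart, hbox', ?_⟩, ?_⟩
  · rw [← hsh]
    refine hpart.sh1_congr hπ fun x => ?_
    simpa [relayer, expand] using congrFun hrep (0, x)
  · rw [relayer, exponent_expand hj (fun _ => compress_eq_zero) (finite_corners hcomp.1),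
      exponent_compress hπ hl hE, expVec_eq_mapDomain j]

theorem leftInvOn_relayer (hl : StrictMono l) (hj : StrictMono j) :
    Set.LeftInvOn (relayer j l) (relayer l j) (partsWithExponent m N nLast ρ (expVec l a w)) := by
  rintro π ⟨⟨hπ, -, -⟩, hE⟩
  rw [relayer, relayer, compress_expand hj fun _ => compress_eq_zero,
    expand_compress_of_exponent_eq hπ hl hE]

theorem finprod_corners_eq_monomial (h : (corners π).Finite) :
    ∏ᶠ c ∈ corners π, (X (Sum.inl c.1) * ∏ ℓ : Fin e, X (Sum.inr (ℓ, c.2.1 ℓ)) :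
      MvPolynomial (ℕ ⊕ (Fin e × ℕ)) ℚ) = monomial (exponent π) 1 := by
  rw [exponent, finprod_mem_eq_finite_toFinset_prod _ h, finsum_mem_eq_finite_toFinset_sum _ h,
    monomial_sum_one]
  refine prod_congr rfl fun c _ => ?_
  rw [cornerExponent, ← one_mul (1 : ℚ), ← monomial_mul, monomial_sum_one]
  rfl

theorem coeff_gFull (v : (ℕ ⊕ (Fin e × ℕ)) →₀ ℕ) :
    coeff v (gFull e m N nLast ρ) = (partsWithExponent m N nLast ρ v).ncard := by
  have hS : {π : ℕ × (Fin e → ℕ) → ℕ | IsPart π ∧ InBox m N nLast π ∧ sh1 π = Diag ρ}.Finite :=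
    (finite_setOf_inBox m N nLast).subset fun _ hπ => hπ.2.1
  have hmono : gFull e m N nLast ρ = ∑ᶠ π ∈ {π : ℕ × (Fin e → ℕ) → ℕ | IsPart π ∧
      InBox m N nLast π ∧ sh1 π = Diag ρ}, monomial (exponent π) 1 :=
    finsum_mem_congr rfl fun π hπ => finprod_corners_eq_monomial (finite_corners hπ.1.1)
  rw [hmono, finsum_mem_eq_finite_toFinset_sum _ hS, coeff_sum]
  simp only [coeff_monomial]
  rw [sum_boole, ← Set.ncard_coe_finset]
  congr
  ext π
  simp [partsWithExponent, and_assoc]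

end HDG

theorem gFull_quasisymmetric_general {e : ℕ} (m : ℕ) (N : Fin e → ℕ) (nLast : ℕ)
    (ρ : (Fin e → ℕ) → ℕ)
    {k : ℕ} (a : Fin k → ℕ)
    (l j : Fin k → ℕ) (hl : StrictMono l) (hj : StrictMono j)
    (hlm : ∀ t, l t < m) (hjm : ∀ t, j t < m) (w : (Fin e × ℕ) →₀ ℕ) :
    MvPolynomial.coeff (expVec l a w) (gFull e m N nLast ρ)
      = MvPolynomial.coeff (expVec j a w) (gFull e m N nLast ρ) := by
  have hbij : Set.BijOn (relayer l j) (partsWithExponent m N nLast ρ (expVec l a w))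
      (partsWithExponent m N nLast ρ (expVec j a w)) :=
    Set.InvOn.bijOn ⟨leftInvOn_relayer hl hj, leftInvOn_relayer hj hl⟩
      (mapsTo_relayer hl hj hjm) (mapsTo_relayer hj hl hlm)
  rw [coeff_gFull, coeff_gFull, hbij.ncard_eq]

/-- Quasisymmetry of `g_ρ` in the first alphabet `x^{(1)} = (x₁, …, x_{n₁})`:
for positive exponents `a` and strictly increasing index sequences `l`, `j` in `[n₁]`,
the coefficients of the corresponding monomials agree (for any fixed monomial `w` in
the other alphabets). -/
theorem gFull_quasisymmetric {e : ℕ} (m : ℕ) (N : Fin e → ℕ) (nLast : ℕ)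
    (ρ : (Fin e → ℕ) → ℕ) (hρ : IsPart' ρ)
    {k : ℕ} (a : Fin k → ℕ) (ha : ∀ t, 0 < a t)
    (l j : Fin k → ℕ) (hl : StrictMono l) (hj : StrictMono j)
    (hlm : ∀ t, l t < m) (hjm : ∀ t, j t < m) (w : (Fin e × ℕ) →₀ ℕ) :
    MvPolynomial.coeff (expVec l a w) (gFull e m N nLast ρ)
      = MvPolynomial.coeff (expVec j a w) (gFull e m N nLast ρ) :=
  gFull_quasisymmetric_general m N nLast ρ a l j hl hj hlm hjm w
end
end
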